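/- arXiv:2602.14361 — 4 statements merged into one kernel-verified Lean document; each statement's English description precedes it below -/
import Mathlib

section
/- Let (X,d,μ) be a space of homogeneous type, p ∈ (0,1], and W ∈ A_p(X,ℂ^m) have A_p dimension d ∈ [0,D). Let {A_Q}_{Q∈𝒬} be reducing operators of order p for W on the dyadic cubes. Then there is a constant C > 0 such that for all dyadic cubes P, Q, ‖A_Q A_P^{-1}‖ ≤ C · max{(ℓ(P)/ℓ(Q))^{d/p}, 1} · (1 + d(z_P,z_Q)/max{ℓ(P),ℓ(Q)})^{d/p}, where z_P, z_Q are the centers and ℓ(P), ℓ(Q) the sidelengths δ^k of the cubes. -/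
open MeasureTheory
open scoped ENNReal ComplexOrder

/-- The matrix `A` acting as a continuous linear map on `ℂ^m`. -/
noncomputable def matCLM {m : ℕ} (A : Matrix (Fin m) (Fin m) ℂ) :
    EuclideanSpace ℂ (Fin m) →L[ℂ] EuclideanSpace ℂ (Fin m) :=
  Matrix.toEuclideanCLM (𝕜 := ℂ) A

/-- The operator norm of a matrix on `ℂ^m`. -/
noncomputable def opN {m : ℕ} (A : Matrix (Fin m) (Fin m) ℂ) : ℝ := ‖matCLM A‖

/-- The real power `A^r` of a (Hermitian) matrix, via the spectral decomposition. -/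
noncomputable def matRpow {m : ℕ} (A : Matrix (Fin m) (Fin m) ℂ) (r : ℝ) :
    Matrix (Fin m) (Fin m) ℂ :=
  if hA : A.IsHermitian then
    (hA.eigenvectorUnitary : Matrix (Fin m) (Fin m) ℂ) *
      Matrix.diagonal (fun i => ((hA.eigenvalues i ^ r : ℝ) : ℂ)) *
      star (hA.eigenvectorUnitary : Matrix (Fin m) (Fin m) ℂ)
  else 0

/-!
Fix cubes `Q`, `P` and let `B` be the outer ball of `Q`. Writing
`W^{1/p}(x) ζ = (W^{1/p}(x) W^{-1/p}(y)) W^{1/p}(y) ζ`, for a.e. `y ∈ P` the average of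
`|W^{1/p} ζ|^p` over `Q` is at most `μ B / μ Q` times the `B`-average of
`‖W^{1/p}(·) W^{-1/p}(y)‖^p` times `|W^{1/p}(y) ζ|^p`. Doubling bounds `μ B / μ Q`, and since
`P` lies in the dilate `R B` with `R ≈ max(ℓ(P)/ℓ(Q), 1) (1 + d(z_P, z_Q) / max(ℓ(P), ℓ(Q)))`,
the `A_p` dimension bounds the middle factor by `R^d` up to a constant. Averaging over `y ∈ P`
and applying the two-sided reducing-operator bounds to `ζ = A_P⁻¹ η` gives
`‖A_Q A_P⁻¹ η‖ ≲ R^{d/p} ‖η‖`.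
-/

lemma matCLM_mul_apply {m : ℕ} (A B : Matrix (Fin m) (Fin m) ℂ) (v : EuclideanSpace ℂ (Fin m)) :
    matCLM (A * B) v = matCLM A (matCLM B v) := by
  simp only [matCLM, map_mul]; rfl

lemma matRpow_mul_matRpow_neg {m : ℕ} {M : Matrix (Fin m) (Fin m) ℂ} (hM : M.PosDef) (r : ℝ) :
    matRpow M r * matRpow M (-r) = 1 := by
  have hH := hM.isHermitian
  set U : Matrix (Fin m) (Fin m) ℂ := (hH.eigenvectorUnitary : Matrix (Fin m) (Fin m) ℂ)
  have hdiag : Matrix.diagonal (fun i => ((hH.eigenvalues i ^ r : ℝ) : ℂ)) *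
      Matrix.diagonal (fun i => ((hH.eigenvalues i ^ (-r) : ℝ) : ℂ)) = 1 := by
    rw [Matrix.diagonal_mul_diagonal, ← Matrix.diagonal_one]
    congr 1
    funext i
    rw [← Complex.ofReal_mul, ← Real.rpow_add (hM.eigenvalues_pos i), add_neg_cancel,
      Real.rpow_zero, Complex.ofReal_one]
  rw [matRpow, matRpow, dif_pos hH, dif_pos hH]
  calc U * Matrix.diagonal (fun i => ((hH.eigenvalues i ^ r : ℝ) : ℂ)) * star U *
        (U * Matrix.diagonal (fun i => ((hH.eigenvalues i ^ (-r) : ℝ) : ℂ)) * star U)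
      = U * (Matrix.diagonal (fun i => ((hH.eigenvalues i ^ r : ℝ) : ℂ)) * (star U * U) *
          Matrix.diagonal (fun i => ((hH.eigenvalues i ^ (-r) : ℝ) : ℂ))) * star U := by
        simp only [mul_assoc]
    _ = 1 := by
        rw [Unitary.coe_star_mul_self, mul_one, hdiag, mul_one]
        exact Unitary.coe_mul_star_self hH.eigenvectorUnitary

lemma norm_matCLM_le_opN_mul_norm {m : ℕ} {M N N' : Matrix (Fin m) (Fin m) ℂ} (h : N' * N = 1)
    (v : EuclideanSpace ℂ (Fin m)) : ‖matCLM M v‖ ≤ opN (M * N') * ‖matCLM N v‖ :=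
  calc ‖matCLM M v‖ = ‖matCLM (M * N') (matCLM N v)‖ := by
        rw [← matCLM_mul_apply, mul_assoc, h, mul_one]
    _ ≤ opN (M * N') * ‖matCLM N v‖ := (matCLM (M * N')).le_opNorm _

lemma opN_mul_inv_le_of_norm_le {m : ℕ} {B A : Matrix (Fin m) (Fin m) ℂ} (hA : IsUnit A.det)
    {c : ℝ} (hc : 0 ≤ c) (h : ∀ v, ‖matCLM B v‖ ≤ c * ‖matCLM A v‖) : opN (B * A⁻¹) ≤ c :=
  ContinuousLinearMap.opNorm_le_bound _ hc fun v => by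
    have hv : matCLM A (matCLM A⁻¹ v) = v := by
      rw [← matCLM_mul_apply, Matrix.mul_nonsing_inv _ hA]
      simp [matCLM]
    simpa only [matCLM_mul_apply, hv] using h (matCLM A⁻¹ v)

lemma ae_nnnorm_rpow_le_mul_opN_rpow {X : Type*} [MeasurableSpace X] {μ : Measure X} {m : ℕ}
    {W : X → Matrix (Fin m) (Fin m) ℂ} (hW : ∀ x, (W x).PosSemidef)
    (hWinv : ∀ᵐ x ∂μ, IsUnit (W x)) {p : ℝ} (hp : 0 ≤ p) (r : ℝ)
    (ζ : EuclideanSpace ℂ (Fin m)) :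
    ∀ᵐ y ∂μ, ∀ x, (‖matCLM (matRpow (W x) r) ζ‖₊ : ℝ≥0∞) ^ p ≤
      (‖matCLM (matRpow (W y) r) ζ‖₊ : ℝ≥0∞) ^ p *
        ENNReal.ofReal (opN (matRpow (W x) r * matRpow (W y) (-r))) ^ p := by
  filter_upwards [hWinv] with y hy x
  have hinv : matRpow (W y) (-r) * matRpow (W y) r = 1 := by
    simpa using matRpow_mul_matRpow_neg ((hW y).posDef_iff_isUnit.mpr hy) (-r)
  rw [← ENNReal.mul_rpow_of_nonneg _ _ hp, ← enorm_eq_nnnorm, ← enorm_eq_nnnorm, ← ofReal_norm,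
    ← ofReal_norm, ← ENNReal.ofReal_mul (norm_nonneg _), mul_comm ‖_‖]
  gcongr
  exact norm_matCLM_le_opN_mul_norm hinv ζ

section Averages

variable {X : Type*} [MeasurableSpace X] {μ : Measure X}

lemma inv_mul_setLIntegral_eq_setLAverage (s : Set X) (f : X → ℝ≥0∞) :
    (μ s)⁻¹ * ∫⁻ x in s, f x ∂μ = ⨍⁻ x in s, f x ∂μ := by
  rw [setLAverage_eq, ENNReal.div_eq_inv_mul]

lemma setLAverage_const_mul (s : Set X) (f : X → ℝ≥0∞) {c : ℝ≥0∞} (hc : c ≠ ∞) :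
    ⨍⁻ x in s, c * f x ∂μ = c * ⨍⁻ x in s, f x ∂μ := by
  rw [setLAverage_eq, setLAverage_eq, lintegral_const_mul' _ _ hc, mul_div_assoc]

lemma setLAverage_le_mul_setLAverage_of_subset {Q B : Set X} (f : X → ℝ≥0∞) {a : ℝ≥0∞}
    (hQB : Q ⊆ B) (hQ0 : μ Q ≠ 0) (hQ : μ Q ≠ ∞) (ha : a ≠ ∞) (hB : μ B ≤ a * μ Q) :
    ⨍⁻ x in Q, f x ∂μ ≤ a * ⨍⁻ x in B, f x ∂μ := by
  have hB0 : μ B ≠ 0 := (pos_iff_ne_zero.2 hQ0 |>.trans_le (measure_mono hQB)).ne'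
  have hBtop : μ B ≠ ∞ := ne_top_of_le_ne_top (ENNReal.mul_ne_top ha hQ) hB
  rw [setLAverage_eq, setLAverage_eq, ENNReal.div_le_iff hQ0 hQ]
  calc ∫⁻ x in Q, f x ∂μ ≤ ∫⁻ x in B, f x ∂μ := lintegral_mono_set hQB
    _ = μ B * ((∫⁻ x in B, f x ∂μ) / μ B) := (ENNReal.mul_div_cancel hB0 hBtop).symm
    _ ≤ a * μ Q * ((∫⁻ x in B, f x ∂μ) / μ B) := by gcongr
    _ = a * ((∫⁻ x in B, f x ∂μ) / μ B) * μ Q := by ring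

lemma le_mul_setLAverage_of_ae_le {P : Set X} {f : X → ℝ≥0∞} {T K : ℝ≥0∞} (hP0 : μ P ≠ 0)
    (hP : μ P ≠ ∞) (hK : K ≠ ∞) (h : ∀ᵐ y ∂μ.restrict P, T ≤ K * f y) :
    T ≤ K * ⨍⁻ y in P, f y ∂μ :=
  calc T = ⨍⁻ _ in P, T ∂μ := (setLAverage_const hP0 hP T).symm
    _ ≤ ⨍⁻ y in P, K * f y ∂μ := laverage_mono_ae h
    _ = K * ⨍⁻ y in P, f y ∂μ := setLAverage_const_mul P f hK

lemma setLAverage_le_mul_mul_setLAverage {Q B P : Set X} {f : X → ℝ≥0∞} {g : X → X → ℝ≥0∞}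
    {a c : ℝ≥0∞} (hQB : Q ⊆ B) (hQ0 : μ Q ≠ 0) (hQ : μ Q ≠ ∞) (ha : a ≠ ∞)
    (hB : μ B ≤ a * μ Q) (hP0 : μ P ≠ 0) (hP : μ P ≠ ∞) (hc : c ≠ ∞) (hf : ∀ y, f y ≠ ∞)
    (hfg : ∀ᵐ y ∂μ.restrict P, ∀ x, f x ≤ f y * g x y)
    (hg : ∀ᵐ y ∂μ.restrict P, ⨍⁻ x in B, g x y ∂μ ≤ c) :
    ⨍⁻ x in Q, f x ∂μ ≤ a * c * ⨍⁻ y in P, f y ∂μ := by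
  refine le_mul_setLAverage_of_ae_le hP0 hP (ENNReal.mul_ne_top ha hc) ?_
  filter_upwards [hfg, hg] with y hfgy hgy
  calc ⨍⁻ x in Q, f x ∂μ ≤ a * ⨍⁻ x in B, f x ∂μ :=
        setLAverage_le_mul_setLAverage_of_subset f hQB hQ0 hQ ha hB
    _ ≤ a * ⨍⁻ x in B, f y * g x y ∂μ := by
        gcongr
        exact Filter.Eventually.of_forall hfgy
    _ ≤ a * (f y * c) := by rw [setLAverage_const_mul B _ (hf y)]; gcongr
    _ = a * c * f y := by ring

end Averages

lemma subset_ball_of_subset_ball {X : Type*} {d : X → X → ℝ} {A₀ : ℝ}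
    (hd_tri : ∀ x y u, d x y ≤ A₀ * (d x u + d u y))
    (hA₀ : 0 < A₀) {S : Set X} {x x' : X} {r s : ℝ} (hS : S ⊆ {y | d y x < r})
    (hs : A₀ * (r + d x x') ≤ s) : S ⊆ {y | d y x' < s} := fun y hy =>
  (hd_tri y x' x).trans_lt ((mul_lt_mul_of_pos_left (add_lt_add_left (hS hy) _) hA₀).trans_le hs)

lemma exists_le_zpow_neg_le_div {δ R : ℝ} (hδ0 : 0 < δ) (hδ1 : δ < 1) (hR : 1 ≤ R) :
    ∃ i : ℕ, R ≤ δ ^ (-(i : ℤ)) ∧ δ ^ (-(i : ℤ)) ≤ R / δ := by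
  obtain ⟨n, hn, hn'⟩ := exists_nat_pow_near hR ((one_lt_inv₀ hδ0).2 hδ1)
  refine ⟨n + 1, ?_, ?_⟩ <;> rw [zpow_neg, zpow_natCast, ← inv_pow]
  · exact hn'.le
  · rw [pow_succ, div_eq_mul_inv]
    gcongr

lemma mul_add_le_dyadic_radius {A₀ C₀ u v t : ℝ} (hA₀ : 0 ≤ A₀) (hC₀ : 0 < C₀) (hu : 0 < u)
    (hv : 0 < v) (ht : 0 ≤ t) :
    A₀ * (2 * A₀ * C₀ * u + t) ≤
      (A₀ + 1 / (2 * C₀)) * (max (u / v) 1 * (1 + t / max u v)) * (2 * A₀ * C₀ * v) := by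
  have hL : max (u / v) 1 * v = max u v := by
    rw [max_mul_of_nonneg _ _ hv.le, div_mul_cancel₀ _ hv.ne', one_mul]
  have hLpos : 0 < max u v := lt_max_of_lt_left hu
  calc A₀ * (2 * A₀ * C₀ * u + t) ≤ (2 * A₀ ^ 2 * C₀ + A₀) * (max u v + t) := by
        nlinarith [le_max_left u v, mul_nonneg (mul_nonneg hA₀ hA₀) hC₀.le,
          mul_nonneg hA₀ hLpos.le, mul_nonneg (mul_nonneg hA₀ hA₀) ht]
    _ = (A₀ + 1 / (2 * C₀)) * (max (u / v) 1 * (1 + t / max u v)) * (2 * A₀ * C₀ * v) := by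
        rw [mul_comm (max (u / v) 1), mul_mul_mul_comm, mul_assoc _ _ v, hL]
        field_simp

lemma opN_mul_inv_le_of_forall_rpow_le {m : ℕ} {AQ AP : Matrix (Fin m) (Fin m) ℂ}
    (hAP : IsUnit AP.det) {FQ FP : EuclideanSpace ℂ (Fin m) → ℝ≥0∞} {p c₁ c₂ K : ℝ}
    (hp : 0 < p) (hc₁ : 0 < c₁) (hc₂ : 0 ≤ c₂) (hK : 0 ≤ K)
    (hP : ∀ v, ENNReal.ofReal c₁ * FP v ^ (1 / p) ≤ ENNReal.ofReal ‖matCLM AP v‖)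
    (hQ : ∀ v, ENNReal.ofReal ‖matCLM AQ v‖ ≤ ENNReal.ofReal c₂ * FQ v ^ (1 / p))
    (hQP : ∀ v, FQ v ≤ ENNReal.ofReal K * FP v) :
    opN (AQ * AP⁻¹) ≤ c₂ / c₁ * K ^ (1 / p) := by
  refine opN_mul_inv_le_of_norm_le hAP (by positivity) fun v => ?_
  have hFP : FP v ^ (1 / p) ≤ ENNReal.ofReal (‖matCLM AP v‖ / c₁) := by
    rw [ENNReal.ofReal_div_of_pos hc₁, ENNReal.le_div_iff_mul_le (Or.inl (by simpa using hc₁))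
      (Or.inl ENNReal.ofReal_ne_top), mul_comm]
    exact hP v
  rw [← ENNReal.ofReal_le_ofReal_iff (by positivity)]
  calc ENNReal.ofReal ‖matCLM AQ v‖ ≤ ENNReal.ofReal c₂ * FQ v ^ (1 / p) := hQ v
    _ ≤ ENNReal.ofReal c₂ * (ENNReal.ofReal K * FP v) ^ (1 / p) := by gcongr; exact hQP v
    _ = ENNReal.ofReal c₂ * (ENNReal.ofReal (K ^ (1 / p)) * FP v ^ (1 / p)) := by
        rw [ENNReal.mul_rpow_of_nonneg _ _ (by positivity),
          ENNReal.ofReal_rpow_of_nonneg hK (by positivity)]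
    _ ≤ ENNReal.ofReal c₂ * (ENNReal.ofReal (K ^ (1 / p)) *
          ENNReal.ofReal (‖matCLM AP v‖ / c₁)) := by gcongr
    _ = ENNReal.ofReal (c₂ / c₁ * K ^ (1 / p) * ‖matCLM AP v‖) := by
        rw [← ENNReal.ofReal_mul (by positivity), ← ENNReal.ofReal_mul hc₂]
        congr 1
        ring

lemma exists_ae_setLAverage_le_of_dimension {X : Type*} [MeasurableSpace X] {μ : Measure X}
    {d : X → X → ℝ} {g : X → X → ℝ≥0∞} {δ dA CD : ℝ} (hδ0 : 0 < δ) (hδ1 : δ < 1)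
    (hdA : 0 ≤ dA)
    (hdim : ∀ (x₀ : X) (r : ℝ), 0 < r → ∀ i : ℕ,
      ∀ᵐ x ∂μ.restrict {u | d u x₀ < δ ^ (-(i : ℤ)) * r},
        ⨍⁻ y in {u | d u x₀ < r}, g y x ∂μ ≤ ENNReal.ofReal (CD * δ ^ (-(i : ℝ) * dA))) :
    ∃ b > 0, ∀ (x₀ : X) (r : ℝ), 0 < r → ∀ R : ℝ, 1 ≤ R →
      ∀ᵐ x ∂μ.restrict {u | d u x₀ < R * r},
        ⨍⁻ y in {u | d u x₀ < r}, g y x ∂μ ≤ ENNReal.ofReal (b * (R / δ) ^ dA) := by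
  refine ⟨max CD 1, by positivity, fun x₀ r hr R hR => ?_⟩
  obtain ⟨i, hRi, hiR⟩ := exists_le_zpow_neg_le_div hδ0 hδ1 hR
  have hsub : {u | d u x₀ < R * r} ⊆ {u | d u x₀ < δ ^ (-(i : ℤ)) * r} :=
    fun u hu => hu.trans_le (mul_le_mul_of_nonneg_right hRi hr.le)
  filter_upwards [ae_restrict_of_ae_restrict_of_subset hsub (hdim x₀ r hr i)] with x hx
  have hpow : δ ^ (-(i : ℝ) * dA) = (δ ^ (-(i : ℤ))) ^ dA := by
    rw [Real.rpow_mul hδ0.le, Real.rpow_neg hδ0.le, Real.rpow_natCast, zpow_neg, zpow_natCast]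
  refine hx.trans (ENNReal.ofReal_le_ofReal ?_)
  rw [hpow]
  calc CD * (δ ^ (-(i : ℤ))) ^ dA ≤ max CD 1 * (δ ^ (-(i : ℤ))) ^ dA := by
        gcongr
        exact le_max_left _ _
    _ ≤ max CD 1 * (R / δ) ^ dA := by gcongr

lemma exists_measure_ball_le_mul_measure_cube {X ι : Type*} [MeasurableSpace X]
    {μ : Measure X} {d : X → X → ℝ} {A₀ Cμ D δ c₀ C₀ : ℝ} {cube : ℤ → ι → Set X}
    {z : ℤ → ι → X} (hA₀ : 1 ≤ A₀) (hCμ : 0 < Cμ) (hδ0 : 0 < δ) (hc₀ : 0 < c₀)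
    (hc₀C₀ : c₀ ≤ C₀)
    (hdoub : ∀ (x : X) (r lam : ℝ), 0 < r → 1 ≤ lam →
      μ {y | d y x < lam * r} ≤ ENNReal.ofReal (Cμ * lam ^ D) * μ {y | d y x < r})
    (hinner : ∀ k α, {y | d y (z k α) < (3 * A₀ ^ 2)⁻¹ * c₀ * δ ^ k} ⊆ cube k α) :
    ∃ a > 0, ∀ k α,
      μ {y | d y (z k α) < 2 * A₀ * C₀ * δ ^ k} ≤ ENNReal.ofReal a * μ (cube k α) := by
  have hA₀0 : 0 < A₀ := one_pos.trans_le hA₀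
  have hlam : 1 ≤ 6 * A₀ ^ 3 * C₀ / c₀ := by
    rw [le_div_iff₀ hc₀, one_mul]
    nlinarith [one_le_pow₀ (n := 3) hA₀, hc₀.trans_le hc₀C₀]
  refine ⟨Cμ * (6 * A₀ ^ 3 * C₀ / c₀) ^ D, by positivity, fun k α => ?_⟩
  have hr : 2 * A₀ * C₀ * δ ^ k = 6 * A₀ ^ 3 * C₀ / c₀ * ((3 * A₀ ^ 2)⁻¹ * c₀ * δ ^ k) := by
    field_simp
    ring
  rw [hr]
  exact (hdoub _ _ _ (by positivity) hlam).trans (by gcongr; exact hinner k α)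

lemma mul_mul_dilation_rpow_eq {a b K δ x t dA p : ℝ} (ha : 0 ≤ a) (hb : 0 ≤ b) (hK : 0 ≤ K)
    (hδ : 0 < δ) (hx : 0 ≤ x) (ht : 0 ≤ t) (hdA : 0 ≤ dA) (hp : 0 < p) :
    (a * (b * (K * (max x 1 * (1 + t)) / δ) ^ dA)) ^ (1 / p) =
      (a * b) ^ (1 / p) * (K / δ) ^ (dA / p) * max (x ^ (dA / p)) 1 * (1 + t) ^ (dA / p) := by
  have hsplit : K * (max x 1 * (1 + t)) / δ = K / δ * max x 1 * (1 + t) := by ring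
  have hdAp : 0 ≤ dA / p := by positivity
  rw [hsplit, ← mul_assoc, Real.mul_rpow (by positivity) (by positivity),
    ← Real.rpow_mul (by positivity), mul_one_div, Real.mul_rpow (by positivity) (by positivity),
    Real.mul_rpow (by positivity) (by positivity), Real.mul_rpow (by positivity) (by positivity),
    Real.rpow_max hx zero_le_one hdAp, Real.one_rpow]
  ring

theorem reducing_operator_growth_p_le_one_general {X : Type*} [MeasurableSpace X] {ι : Type*}
    (d : X → X → ℝ) (A₀ : ℝ) (hA₀ : 1 ≤ A₀)
    (hd_nonneg : ∀ x y, 0 ≤ d x y)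
    (hd_tri : ∀ x y u, d x y ≤ A₀ * (d x u + d u y))
    (μ : Measure X)
    (Cμ D : ℝ) (hCμ : 1 ≤ Cμ)
    (hdoub : ∀ (x : X) (r lam : ℝ), 0 < r → 1 ≤ lam →
      μ {y | d y x < lam * r} ≤ ENNReal.ofReal (Cμ * lam ^ D) * μ {y | d y x < r})
    -- the dyadic system
    (δ c₀ C₀ : ℝ) (hδ0 : 0 < δ) (hδ1 : δ < 1) (hc₀ : 0 < c₀) (hc₀C₀ : c₀ ≤ C₀)
    (cube : ℤ → ι → Set X) (z : ℤ → ι → X)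
    (hsandwich : ∀ (k : ℤ) (α : ι),
      {y | d y (z k α) < (3 * A₀ ^ 2)⁻¹ * c₀ * δ ^ k} ⊆ cube k α ∧
        cube k α ⊆ {y | d y (z k α) < 2 * A₀ * C₀ * δ ^ k})
    (hcubeμ : ∀ (k : ℤ) (α : ι), MeasurableSet (cube k α) ∧
      0 < μ (cube k α) ∧ μ (cube k α) < ⊤)
    -- the matrix weight, its `A_p` condition and its `A_p` dimension `dA`
    (m : ℕ) (p : ℝ) (hp0 : 0 < p)
    (W : X → Matrix (Fin m) (Fin m) ℂ) (hW : ∀ x, (W x).PosSemidef)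
    (hWinv : ∀ᵐ x ∂μ, IsUnit (W x))
    (dA : ℝ) (hdA0 : 0 ≤ dA) (CD : ℝ)
    (hdim : ∀ (x₀ : X) (r : ℝ), 0 < r → ∀ i : ℕ,
      ∀ᵐ x ∂μ.restrict {u | d u x₀ < δ ^ (-(i : ℤ)) * r},
        (μ {u | d u x₀ < r})⁻¹ *
            ∫⁻ y in {u | d u x₀ < r},
              ENNReal.ofReal (opN (matRpow (W y) (1 / p) * matRpow (W x) (-(1 / p)))) ^ p ∂μ ≤
          ENNReal.ofReal (CD * δ ^ (-(i : ℝ) * dA)))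
    -- the reducing operators
    (A : ℤ → ι → Matrix (Fin m) (Fin m) ℂ) (hApos : ∀ k α, (A k α).PosDef)
    (c₁ c₂ : ℝ) (hc₁ : 0 < c₁) (hc₂ : 0 < c₂)
    (hred : ∀ (k : ℤ) (α : ι), ∀ η : EuclideanSpace ℂ (Fin m),
      ENNReal.ofReal c₁ *
          ((μ (cube k α))⁻¹ *
            ∫⁻ x in cube k α, (‖matCLM (matRpow (W x) (1 / p)) η‖₊ : ℝ≥0∞) ^ p ∂μ) ^ (1 / p)
          ≤ ENNReal.ofReal ‖matCLM (A k α) η‖ ∧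
        ENNReal.ofReal ‖matCLM (A k α) η‖ ≤
          ENNReal.ofReal c₂ *
            ((μ (cube k α))⁻¹ *
              ∫⁻ x in cube k α, (‖matCLM (matRpow (W x) (1 / p)) η‖₊ : ℝ≥0∞) ^ p ∂μ) ^ (1 / p)) :
    ∃ C : ℝ, 0 < C ∧ ∀ (k : ℤ) (α : ι) (j : ℤ) (β : ι),
      opN (A k α * (A j β)⁻¹) ≤
        C * max ((δ ^ j / δ ^ k) ^ (dA / p)) 1 *
          (1 + d (z j β) (z k α) / max (δ ^ j) (δ ^ k)) ^ (dA / p) := by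
  have hA₀0 : 0 < A₀ := one_pos.trans_le hA₀
  have hC₀ : 0 < C₀ := hc₀.trans_le hc₀C₀
  simp only [inv_mul_setLIntegral_eq_setLAverage] at hdim hred
  obtain ⟨a, ha, hdoubQ⟩ := exists_measure_ball_le_mul_measure_cube hA₀ (one_pos.trans_le hCμ)
    hδ0 hc₀ hc₀C₀ hdoub fun k α => (hsandwich k α).1
  obtain ⟨b, hb, hgrowth⟩ := exists_ae_setLAverage_le_of_dimension hδ0 hδ1 hdA0 hdim
  set K := A₀ + 1 / (2 * C₀)
  refine ⟨c₂ / c₁ * (a * b) ^ (1 / p) * (K / δ) ^ (dA / p), by positivity, fun k α j β => ?_⟩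
  have ht := hd_nonneg (z j β) (z k α)
  set R := K * (max (δ ^ j / δ ^ k) 1 * (1 + d (z j β) (z k α) / max (δ ^ j) (δ ^ k)))
  have hR : 1 ≤ R := one_le_mul_of_one_le_of_one_le (le_add_of_le_of_nonneg hA₀ (by positivity))
    (one_le_mul_of_one_le_of_one_le (le_max_right _ _)
      (le_add_of_nonneg_right (div_nonneg ht (by positivity))))
  have hPB : cube j β ⊆ {u | d u (z k α) < R * (2 * A₀ * C₀ * δ ^ k)} :=
    subset_ball_of_subset_ball hd_tri hA₀0 (hsandwich j β).2
      (mul_add_le_dyadic_radius hA₀0.le hC₀ (zpow_pos hδ0 j) (zpow_pos hδ0 k) ht)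
  have hcmp : ∀ ζ, ⨍⁻ x in cube k α, (‖matCLM (matRpow (W x) (1 / p)) ζ‖₊ : ℝ≥0∞) ^ p ∂μ ≤
      ENNReal.ofReal (a * (b * (R / δ) ^ dA)) *
        ⨍⁻ x in cube j β, (‖matCLM (matRpow (W x) (1 / p)) ζ‖₊ : ℝ≥0∞) ^ p ∂μ := fun ζ => by
    rw [ENNReal.ofReal_mul ha.le]
    exact setLAverage_le_mul_mul_setLAverage (hsandwich k α).2 (hcubeμ k α).2.1.ne'
      (hcubeμ k α).2.2.ne ENNReal.ofReal_ne_top (hdoubQ k α) (hcubeμ j β).2.1.ne'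
      (hcubeμ j β).2.2.ne ENNReal.ofReal_ne_top
      (fun y => ENNReal.rpow_ne_top_of_nonneg hp0.le ENNReal.coe_ne_top)
      (ae_restrict_of_ae (ae_nnnorm_rpow_le_mul_opN_rpow hW hWinv hp0.le _ ζ))
      (ae_restrict_of_ae_restrict_of_subset hPB (hgrowth _ _ (by positivity) R hR))
  have hAP : IsUnit (A j β).det := (A j β).isUnit_iff_isUnit_det.mp (hApos j β).isUnit
  calc opN (A k α * (A j β)⁻¹) ≤ c₂ / c₁ * (a * (b * (R / δ) ^ dA)) ^ (1 / p) :=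
        opN_mul_inv_le_of_forall_rpow_le hAP hp0 hc₁ hc₂.le (by positivity)
          (fun v => (hred j β v).1) (fun v => (hred k α v).2) hcmp
    _ = _ := by
        rw [mul_mul_dilation_rpow_eq ha.le hb.le (by positivity) hδ0 (by positivity)
          (div_nonneg ht (by positivity)) hdA0 hp0]
        ring

/-- For `p ∈ (0,1]`, `W ∈ A_p(X,ℂ^m)` with `A_p` dimension
`dA ∈ [0,D)` and reducing operators `A_Q` of order `p` on the dyadic cubes, there is
`C > 0` such that for all dyadic cubes `P = cube j β` and `Q = cube k α`,
`‖A_Q A_P⁻¹‖ ≤ C max{(ℓ(P)/ℓ(Q))^{dA/p},1} (1 + d(z_P,z_Q)/max{ℓ(P),ℓ(Q)})^{dA/p}`. -/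
theorem reducing_operator_growth_p_le_one {X : Type*} [MeasurableSpace X] {ι : Type*}
    (d : X → X → ℝ) (A₀ : ℝ) (hA₀ : 1 ≤ A₀)
    (hd_nonneg : ∀ x y, 0 ≤ d x y)
    (hd_eq : ∀ x y, d x y = 0 ↔ x = y)
    (hd_symm : ∀ x y, d x y = d y x)
    (hd_tri : ∀ x y u, d x y ≤ A₀ * (d x u + d u y))
    (μ : Measure X)
    (hballμ : ∀ (x : X) (r : ℝ), 0 < r → 0 < μ {y | d y x < r} ∧ μ {y | d y x < r} < ⊤)
    (Cμ D : ℝ) (hCμ : 1 ≤ Cμ)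
    (hdoub : ∀ (x : X) (r lam : ℝ), 0 < r → 1 ≤ lam →
      μ {y | d y x < lam * r} ≤ ENNReal.ofReal (Cμ * lam ^ D) * μ {y | d y x < r})
    -- the dyadic system
    (δ c₀ C₀ : ℝ) (hδ0 : 0 < δ) (hδ1 : δ < 1) (hc₀ : 0 < c₀) (hc₀C₀ : c₀ ≤ C₀)
    (cube : ℤ → ι → Set X) (z : ℤ → ι → X)
    (hcover : ∀ k : ℤ, (⋃ α, cube k α) = Set.univ)
    (hdisj : ∀ k : ℤ, Pairwise fun α β => Disjoint (cube k α) (cube k β))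
    (hsandwich : ∀ (k : ℤ) (α : ι),
      {y | d y (z k α) < (3 * A₀ ^ 2)⁻¹ * c₀ * δ ^ k} ⊆ cube k α ∧
        cube k α ⊆ {y | d y (z k α) < 2 * A₀ * C₀ * δ ^ k})
    (hcubeμ : ∀ (k : ℤ) (α : ι), MeasurableSet (cube k α) ∧
      0 < μ (cube k α) ∧ μ (cube k α) < ⊤)
    -- the matrix weight, its `A_p` condition and its `A_p` dimension `dA`
    (m : ℕ) (p : ℝ) (hp0 : 0 < p) (hp1 : p ≤ 1)
    (W : X → Matrix (Fin m) (Fin m) ℂ) (hW : ∀ x, (W x).PosSemidef)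
    (hWinv : ∀ᵐ x ∂μ, IsUnit (W x))
    (CW : ℝ)
    (hAp : ∀ (x₀ : X) (r : ℝ), 0 < r →
      ∀ᵐ y ∂μ.restrict {u | d u x₀ < r},
        (μ {u | d u x₀ < r})⁻¹ *
            ∫⁻ x in {u | d u x₀ < r},
              ENNReal.ofReal (opN (matRpow (W x) (1 / p) * matRpow (W y) (-(1 / p)))) ^ p ∂μ ≤
          ENNReal.ofReal CW)
    (dA : ℝ) (hdA0 : 0 ≤ dA) (hdAD : dA < D) (CD : ℝ)
    (hdim : ∀ (x₀ : X) (r : ℝ), 0 < r → ∀ i : ℕ,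
      ∀ᵐ x ∂μ.restrict {u | d u x₀ < δ ^ (-(i : ℤ)) * r},
        (μ {u | d u x₀ < r})⁻¹ *
            ∫⁻ y in {u | d u x₀ < r},
              ENNReal.ofReal (opN (matRpow (W y) (1 / p) * matRpow (W x) (-(1 / p)))) ^ p ∂μ ≤
          ENNReal.ofReal (CD * δ ^ (-(i : ℝ) * dA)))
    -- the reducing operators
    (A : ℤ → ι → Matrix (Fin m) (Fin m) ℂ) (hApos : ∀ k α, (A k α).PosDef)
    (c₁ c₂ : ℝ) (hc₁ : 0 < c₁) (hc₂ : 0 < c₂)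
    (hred : ∀ (k : ℤ) (α : ι), ∀ η : EuclideanSpace ℂ (Fin m),
      ENNReal.ofReal c₁ *
          ((μ (cube k α))⁻¹ *
            ∫⁻ x in cube k α, (‖matCLM (matRpow (W x) (1 / p)) η‖₊ : ℝ≥0∞) ^ p ∂μ) ^ (1 / p)
          ≤ ENNReal.ofReal ‖matCLM (A k α) η‖ ∧
        ENNReal.ofReal ‖matCLM (A k α) η‖ ≤
          ENNReal.ofReal c₂ *
            ((μ (cube k α))⁻¹ *
              ∫⁻ x in cube k α, (‖matCLM (matRpow (W x) (1 / p)) η‖₊ : ℝ≥0∞) ^ p ∂μ) ^ (1 / p)) :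
    ∃ C : ℝ, 0 < C ∧ ∀ (k : ℤ) (α : ι) (j : ℤ) (β : ι),
      opN (A k α * (A j β)⁻¹) ≤
        C * max ((δ ^ j / δ ^ k) ^ (dA / p)) 1 *
          (1 + d (z j β) (z k α) / max (δ ^ j) (δ ^ k)) ^ (dA / p) :=
  reducing_operator_growth_p_le_one_general d A₀ hA₀ hd_nonneg hd_tri μ Cμ D hCμ hdoub δ c₀ C₀ hδ0
    hδ1 hc₀ hc₀C₀ cube z hsandwich hcubeμ m p hp0 W hW hWinv dA hdA0 CD hdim A hApos c₁ c₂ hc₁ hc₂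
    hred
end

section
/- Let 𝒬 be a Hytönen–Kairema dyadic system on a space of homogeneous type (X,d,μ) with parameter δ. For k ∈ ℤ and Q ∈ 𝒬_k, define Q* := ⋃{P ∈ 𝒬_k : P ∩ ⋃_{y∈Q} B(y, δ^{k−2}) ≠ ∅}. Then (a) for every x ∈ Q, B(x, δ^{k−2}) ⊂ Q*, and (b) there is a uniform constant C (independent of x, k, Q) such that μ(Q*) ≤ C μ(B(x, δ^{k−2})) for every x ∈ Q. -/
open MeasureTheory
open scoped ENNReal

/-!
Part (a) holds because the cubes of generation `k` cover `X`. For part (b), every point of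
`Q*` lies in a cube `P` of generation `k` meeting the `δ^(k-2)`-neighbourhood of `Q`; both cubes
have diameter `≲ C₀ δ^k ≤ C₀ δ^(k-2)`, so the quasi-triangle inequality puts `Q*` inside the ball
`B(x, M δ^(k-2))` for a constant `M` depending only on `A₀` and `C₀`, and finitely many applications
of the doubling inequality give `μ(Q*) ≤ Cμ^n μ(B(x, δ^(k-2)))` with `M < 2^n`.
-/

namespace DyadicStar

variable {X : Type*} {ι : Type*}

/-- `star cube d α r` is `Q* := ⋃ {P : P ∩ ⋃_{y ∈ Q} B(y, r) ≠ ∅}` for `Q = cube α`. -/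
def star (cube : ι → Set X) (d : X → X → ℝ) (α : ι) (r : ℝ) : Set X :=
  {w | ∃ β, w ∈ cube β ∧ ∃ u ∈ cube β, ∃ y ∈ cube α, d u y < r}

theorem setOf_lt_subset_star {cube : ι → Set X} (d : X → X → ℝ) (hcover : ⋃ α, cube α = Set.univ)
    {α : ι} {x : X} (hx : x ∈ cube α) (r : ℝ) : {w | d w x < r} ⊆ star cube d α r := by
  intro w hw
  obtain ⟨β, hβ⟩ := Set.mem_iUnion.mp (hcover.symm ▸ Set.mem_univ w : w ∈ ⋃ β, cube β)
  exact ⟨β, hβ, w, hβ, x, hx, hw⟩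

section QuasiMetric

variable {d : X → X → ℝ} {A₀ : ℝ}

theorem lt_two_mul_of_lt_of_lt (hA₀ : 0 < A₀) (hd_symm : ∀ x y, d x y = d y x)
    (hd_tri : ∀ x y z, d x y ≤ A₀ * (d x z + d z y)) {w u c : X} {a : ℝ}
    (hw : d w c < a) (hu : d u c < a) : d w u < 2 * A₀ * a :=
  calc d w u ≤ A₀ * (d w c + d c u) := hd_tri w u c
    _ < A₀ * (a + a) := by rw [hd_symm c u]; gcongr
    _ = 2 * A₀ * a := by ring

theorem star_subset_setOf_lt (hA₀ : 0 < A₀) (hd_symm : ∀ x y, d x y = d y x)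
    (hd_tri : ∀ x y z, d x y ≤ A₀ * (d x z + d z y))
    {cube : ι → Set X} {z : ι → X} {R : ℝ} (hR : ∀ β, cube β ⊆ {y | d y (z β) < R})
    {α : ι} {x : X} (hx : x ∈ cube α) (r : ℝ) :
    star cube d α r ⊆ {w | d w x < A₀ * (2 * A₀ * R + A₀ * (r + 2 * A₀ * R))} := by
  rintro w ⟨β, hwβ, u, huβ, y, hyα, huy⟩
  have hwu := lt_two_mul_of_lt_of_lt hA₀ hd_symm hd_tri (hR β hwβ) (hR β huβ)
  have hyx := lt_two_mul_of_lt_of_lt hA₀ hd_symm hd_tri (hR α hyα) (hR α hx)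
  show d w x < _
  calc d w x ≤ A₀ * (d w u + d u x) := hd_tri w x u
    _ ≤ A₀ * (d w u + A₀ * (d u y + d y x)) := by gcongr; exact hd_tri u x y
    _ < A₀ * (2 * A₀ * R + A₀ * (r + 2 * A₀ * R)) := by gcongr

end QuasiMetric

section Doubling

variable [MeasurableSpace X] {d : X → X → ℝ} {μ : Measure X} {Cμ : ℝ≥0∞}

theorem measure_setOf_lt_two_pow_mul_le
    (hdoub : ∀ (x : X) (r : ℝ), 0 < r → μ {y | d y x < 2 * r} ≤ Cμ * μ {y | d y x < r})
    (n : ℕ) (x : X) {r : ℝ} (hr : 0 < r) :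
    μ {y | d y x < 2 ^ n * r} ≤ Cμ ^ n * μ {y | d y x < r} := by
  induction n with
  | zero => simp
  | succ n ih =>
    calc μ {y | d y x < 2 ^ (n + 1) * r} = μ {y | d y x < 2 * (2 ^ n * r)} := by ring_nf
      _ ≤ Cμ * μ {y | d y x < 2 ^ n * r} := hdoub x _ (by positivity)
      _ ≤ Cμ * (Cμ ^ n * μ {y | d y x < r}) := by gcongr
      _ = Cμ ^ (n + 1) * μ {y | d y x < r} := by ring

theorem exists_measure_setOf_lt_mul_le (hCμ : Cμ ≠ ⊤)
    (hdoub : ∀ (x : X) (r : ℝ), 0 < r → μ {y | d y x < 2 * r} ≤ Cμ * μ {y | d y x < r})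
    (M : ℝ) : ∃ C : ℝ≥0∞, C ≠ ⊤ ∧
      ∀ (x : X) (r : ℝ), 0 < r → μ {y | d y x < M * r} ≤ C * μ {y | d y x < r} := by
  obtain ⟨n, hn⟩ := pow_unbounded_of_one_lt M (one_lt_two (α := ℝ))
  refine ⟨Cμ ^ n, ENNReal.pow_ne_top hCμ, fun x r hr => ?_⟩
  calc μ {y | d y x < M * r} ≤ μ {y | d y x < 2 ^ n * r} :=
        measure_mono fun y hy => hy.trans_le (mul_le_mul_of_nonneg_right hn.le hr.le)
    _ ≤ Cμ ^ n * μ {y | d y x < r} := measure_setOf_lt_two_pow_mul_le hdoub n x hr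

end Doubling

end DyadicStar

open DyadicStar in
theorem dyadic_star_properties_general {X : Type*} [MeasurableSpace X] {ι : Type*}
    (d : X → X → ℝ) (A₀ : ℝ) (hA₀ : 1 ≤ A₀)
    (hd_symm : ∀ x y, d x y = d y x)
    (hd_tri : ∀ x y z, d x y ≤ A₀ * (d x z + d z y))
    (μ : Measure X)
    (Cμ : ℝ≥0∞) (hCμfin : Cμ < ⊤)
    (hdoub : ∀ (x : X) (r : ℝ), 0 < r → μ {y | d y x < 2 * r} ≤ Cμ * μ {y | d y x < r})
    (δ c₀ C₀ : ℝ) (hδ0 : 0 < δ) (hδ1 : δ < 1) (hc₀ : 0 < c₀) (hc₀C₀ : c₀ ≤ C₀)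
    (cube : ℤ → ι → Set X) (z : ℤ → ι → X)
    (hcover : ∀ k : ℤ, (⋃ α, cube k α) = Set.univ)
    (hsandwich : ∀ (k : ℤ) (α : ι),
      {y | d y (z k α) < (3 * A₀ ^ 2)⁻¹ * c₀ * δ ^ k} ⊆ cube k α ∧
        cube k α ⊆ {y | d y (z k α) < 2 * A₀ * C₀ * δ ^ k}) :
    (∀ (k : ℤ) (α : ι) (x : X), x ∈ cube k α →
      {w | d w x < δ ^ (k - 2)} ⊆
        {w | ∃ β, w ∈ cube k β ∧ ∃ u ∈ cube k β, ∃ y ∈ cube k α, d u y < δ ^ (k - 2)}) ∧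
    ∃ C : ℝ≥0∞, C ≠ ⊤ ∧ ∀ (k : ℤ) (α : ι) (x : X), x ∈ cube k α →
      μ {w | ∃ β, w ∈ cube k β ∧ ∃ u ∈ cube k β, ∃ y ∈ cube k α, d u y < δ ^ (k - 2)} ≤
        C * μ {w | d w x < δ ^ (k - 2)} := by
  refine ⟨fun k α x hx => setOf_lt_subset_star d (hcover k) hx _, ?_⟩
  have hA₀pos : 0 < A₀ := one_pos.trans_le hA₀
  set K := 2 * A₀ * C₀
  obtain ⟨C, hC, hμ⟩ := exists_measure_setOf_lt_mul_le hCμfin.ne hdoub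
    (A₀ * (2 * A₀ * K + A₀ * (1 + 2 * A₀ * K)))
  refine ⟨C, hC, fun k α x hx => ?_⟩
  have hr : 0 < δ ^ (k - 2) := zpow_pos hδ0 _
  have hR : ∀ β, cube k β ⊆ {y | d y (z k β) < K * δ ^ (k - 2)} := by
    have hK : 0 ≤ K := by have := hc₀.le.trans hc₀C₀; positivity
    have hδk : δ ^ k ≤ δ ^ (k - 2) := zpow_le_zpow_right_of_le_one₀ hδ0 hδ1.le (by omega)
    exact fun β y hy =>
      ((hsandwich k β).2 hy).trans_le (mul_le_mul_of_nonneg_left hδk hK)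
  calc μ (star (cube k) d α (δ ^ (k - 2)))
      ≤ μ {w | d w x < A₀ * (2 * A₀ * K + A₀ * (1 + 2 * A₀ * K)) * δ ^ (k - 2)} := by
        refine measure_mono ((star_subset_setOf_lt hA₀pos hd_symm hd_tri hR hx _).trans_eq ?_)
        ring_nf
    _ ≤ C * μ {w | d w x < δ ^ (k - 2)} := hμ x _ hr

/-- For a Hytönen–Kairema dyadic system on a space of homogeneous
type and `Q ∈ 𝒬_k`, set `Q* := ⋃ {P ∈ 𝒬_k : P ∩ ⋃_{y∈Q} B(y,δ^{k-2}) ≠ ∅}`.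
Then (a) `B(x,δ^{k-2}) ⊆ Q*` for every `x ∈ Q`, and (b) there is a uniform constant
`C` with `μ(Q*) ≤ C μ(B(x,δ^{k-2}))` for every `x ∈ Q`. -/
theorem dyadic_star_properties {X : Type*} [MeasurableSpace X] {ι : Type*}
    (d : X → X → ℝ) (A₀ : ℝ) (hA₀ : 1 ≤ A₀)
    (hd_nonneg : ∀ x y, 0 ≤ d x y)
    (hd_eq : ∀ x y, d x y = 0 ↔ x = y)
    (hd_symm : ∀ x y, d x y = d y x)
    (hd_tri : ∀ x y z, d x y ≤ A₀ * (d x z + d z y))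
    (μ : Measure X)
    (hball : ∀ (x : X) (r : ℝ), 0 < r → 0 < μ {y | d y x < r} ∧ μ {y | d y x < r} < ⊤)
    (Cμ : ℝ≥0∞) (hCμ : 1 ≤ Cμ) (hCμfin : Cμ < ⊤)
    (hdoub : ∀ (x : X) (r : ℝ), 0 < r → μ {y | d y x < 2 * r} ≤ Cμ * μ {y | d y x < r})
    (δ c₀ C₀ : ℝ) (hδ0 : 0 < δ) (hδ1 : δ < 1) (hc₀ : 0 < c₀) (hc₀C₀ : c₀ ≤ C₀)
    (hgeom : 12 * A₀ ^ 3 * C₀ * δ ≤ c₀)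
    (cube : ℤ → ι → Set X) (z : ℤ → ι → X)
    (hcover : ∀ k : ℤ, (⋃ α, cube k α) = Set.univ)
    (hdisj : ∀ k : ℤ, Pairwise fun α β => Disjoint (cube k α) (cube k β))
    (hsandwich : ∀ (k : ℤ) (α : ι),
      {y | d y (z k α) < (3 * A₀ ^ 2)⁻¹ * c₀ * δ ^ k} ⊆ cube k α ∧
        cube k α ⊆ {y | d y (z k α) < 2 * A₀ * C₀ * δ ^ k}) :
    (∀ (k : ℤ) (α : ι) (x : X), x ∈ cube k α →
      {w | d w x < δ ^ (k - 2)} ⊆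
        {w | ∃ β, w ∈ cube k β ∧ ∃ u ∈ cube k β, ∃ y ∈ cube k α, d u y < δ ^ (k - 2)}) ∧
    ∃ C : ℝ≥0∞, C ≠ ⊤ ∧ ∀ (k : ℤ) (α : ι) (x : X), x ∈ cube k α →
      μ {w | ∃ β, w ∈ cube k β ∧ ∃ u ∈ cube k β, ∃ y ∈ cube k α, d u y < δ ^ (k - 2)} ≤
        C * μ {w | d w x < δ ^ (k - 2)} :=
  dyadic_star_properties_general d A₀ hA₀ hd_symm hd_tri μ Cμ hCμfin hdoub δ c₀ C₀ hδ0 hδ1 hc₀ hc₀C₀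
    cube z hcover hsandwich
end

section
/- Let s ∈ (0,∞), b = (b₊,b₋) a pair of real numbers, δ ∈ (0,1), and define L_{s,b}(t) := t^s [1 + log_δ(min(1,t))]^{-b₊} [1 + log_δ(max(1,t))]^{-b₋} for t > 0. Then for any r ∈ (0,∞) there is a constant C₀ such that for every k₀ ∈ ℤ, ∑_{k=−∞}^{k₀} [L_{s,b}(δ^{k₀}) / L_{s,b}(δ^{k})]^r ≤ C₀. -/
open scoped ENNReal
set_option maxHeartbeats 1000000

/-- The logarithmic smoothness weight
`L_{s,b}(t) = t^s [1+log_δ(1∧t)]^{-b₊} [1+log_δ(1∨t)]^{-b₋}`. -/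
noncomputable def Lsb (s bp bm δ t : ℝ) : ℝ :=
  t ^ s * (1 + Real.logb δ (min 1 t)) ^ (-bp) * (1 + Real.logb δ (max 1 t)) ^ (-bm)

/-- The weight factor of `Lsb` at `δ^j`. -/
noncomputable def LsbW (bp bm : ℝ) (j : ℤ) : ℝ :=
  if 0 ≤ j then (1 + (j : ℝ)) ^ (-bp) else (1 + (j : ℝ)) ^ (-bm)

private lemma rpow_sandwich {t c e E : ℝ} (ht : 1 ≤ t) (htc : t ≤ c) (he : e ≤ E)
    (hE : 0 ≤ E) : t ^ e ≤ c ^ E :=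
  (Real.rpow_le_rpow_of_exponent_le ht he).trans
    (Real.rpow_le_rpow (by linarith) htc hE)

lemma Lsb_eval {s bp bm δ : ℝ} (hδ0 : 0 < δ) (hδ1 : δ < 1) (j : ℤ) :
    Lsb s bp bm δ (δ ^ j) = (δ ^ j) ^ s * LsbW bp bm j := by
  have hlog : Real.logb δ (δ ^ j) = j := by
    rw [Real.logb, Real.log_zpow, mul_div_assoc, div_self (Real.log_neg hδ0 hδ1).ne, mul_one]
  unfold Lsb LsbW
  by_cases h : 0 ≤ j
  · have h1 : δ ^ j ≤ 1 := zpow_le_one₀ hδ0 hδ1.le h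
    rw [min_eq_right h1, max_eq_left h1, hlog, Real.logb_one, if_pos h]
    simp [Real.one_rpow]
  · have h1 : (1 : ℝ) ≤ δ ^ j := one_le_zpow_of_nonpos₀ hδ0 hδ1.le (by omega)
    rw [min_eq_left h1, max_eq_right h1, hlog, Real.logb_one, if_neg h]
    simp [Real.one_rpow]

lemma abs_LsbW_neg {bp bm : ℝ} {j : ℤ} (hj : j ≤ -2) :
    |LsbW bp bm j| = (-(1 + (j : ℝ))) ^ (-bm) * |Real.cos (bm * Real.pi)| := by
  have hjr : (j : ℝ) ≤ -2 := by exact_mod_cast hj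
  have hneg : (1 + (j : ℝ)) < 0 := by linarith
  have hpos : (0 : ℝ) < -(1 + (j : ℝ)) := by linarith
  rw [LsbW, if_neg (by omega), Real.rpow_def_of_neg hneg, abs_mul]
  rw [← Real.log_neg_eq_log, ← Real.rpow_def_of_pos hpos]
  rw [abs_of_pos (Real.rpow_pos_of_pos hpos _), neg_mul, Real.cos_neg]

lemma abs_LsbW_ratio_le {bp bm : ℝ} (k₀ : ℤ) (n : ℕ) :
    |LsbW bp bm k₀| / |LsbW bp bm (k₀ - (n : ℤ))| ≤
      max 1 |Real.cos (bm * Real.pi)|⁻¹ * (1 + (n : ℝ)) ^ (|bp| + |bm|) := by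
  set γ : ℝ := |Real.cos (bm * Real.pi)| with hγdef
  set M : ℝ := max 1 γ⁻¹ with hMdef
  have hM1 : (1 : ℝ) ≤ M := le_max_left _ _
  set B : ℝ := |bp| + |bm| with hBdef
  have hB0 : 0 ≤ B := by positivity
  have hn0 : (0 : ℝ) ≤ (n : ℝ) := Nat.cast_nonneg n
  have hn1 : (1 : ℝ) ≤ 1 + (n : ℝ) := by linarith
  have hnB0 : (0 : ℝ) < (1 + (n : ℝ)) ^ B := Real.rpow_pos_of_pos (by linarith) _
  have hnB1 : (1 : ℝ) ≤ (1 + (n : ℝ)) ^ B := Real.one_le_rpow hn1 hB0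
  have hMB : (1 + (n : ℝ)) ^ B ≤ M * (1 + (n : ℝ)) ^ B := le_mul_of_one_le_left hnB0.le hM1
  set k : ℤ := k₀ - (n : ℤ) with hkdef
  have hkk : (k : ℝ) = (k₀ : ℝ) - (n : ℝ) := by rw [hkdef]; push_cast; ring
  have habs : -bp ≤ B := (neg_le_abs bp).trans (le_add_of_nonneg_right (abs_nonneg bm))
  have wpos : ∀ j : ℤ, 0 ≤ j → LsbW bp bm j = (1 + (j : ℝ)) ^ (-bp) := fun j hj => by
    simp only [LsbW, if_pos hj]
  have wneg : ∀ j : ℤ, ¬0 ≤ j → LsbW bp bm j = (1 + (j : ℝ)) ^ (-bm) := fun j hj => by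
    simp only [LsbW, if_neg hj]
  by_cases hk : 0 ≤ k
  · -- both indices nonnegative
    have hk₀ : 0 ≤ k₀ := by omega
    have hK : (0 : ℝ) ≤ (k : ℝ) := by exact_mod_cast hk
    have hK0 : (0 : ℝ) ≤ (k₀ : ℝ) := by exact_mod_cast hk₀
    have h1k : (0 : ℝ) < 1 + (k : ℝ) := by linarith
    have h1k₀ : (0 : ℝ) < 1 + (k₀ : ℝ) := by linarith
    rw [wpos _ hk₀, wpos _ hk]
    rw [abs_of_pos (Real.rpow_pos_of_pos h1k₀ _), abs_of_pos (Real.rpow_pos_of_pos h1k _),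
      ← Real.div_rpow h1k₀.le h1k.le]
    have ht1 : (1 : ℝ) ≤ (1 + (k₀ : ℝ)) / (1 + (k : ℝ)) :=
      (one_le_div h1k).mpr (by rw [hkk]; linarith)
    have htn : (1 + (k₀ : ℝ)) / (1 + (k : ℝ)) ≤ 1 + (n : ℝ) := by
      rw [div_le_iff₀ h1k]
      nlinarith [mul_nonneg hn0 hK]
    exact le_trans (rpow_sandwich ht1 htn habs hB0) hMB
  · by_cases hk1 : k = -1
    · -- denominator index is -1
      by_cases hbm : bm = 0
      · subst hbm
        simp only [LsbW, if_neg hk, neg_zero, Real.rpow_zero, abs_one, div_one]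
        by_cases hk₀ : 0 ≤ k₀
        · rw [if_pos hk₀]
          have hK0 : (0 : ℝ) ≤ (k₀ : ℝ) := by exact_mod_cast hk₀
          have hK0n : (k₀ : ℝ) ≤ (n : ℝ) := by
            have : k₀ ≤ (n : ℤ) := by omega
            exact_mod_cast this
          rw [abs_of_pos (Real.rpow_pos_of_pos (by linarith) _)]
          exact le_trans (rpow_sandwich (by linarith) (by linarith) habs hB0) hMB
        · rw [if_neg hk₀, abs_one]
          exact le_trans hnB1 hMB
      · have hwn : ∀ j : ℤ, ¬0 ≤ j → LsbW bp bm j = (1 + (j : ℝ)) ^ (-bm) := fun j hj => by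
          simp only [LsbW, if_neg hj]
        rw [hwn _ hk]
        have hzk : (1 : ℝ) + (k : ℝ) = 0 := by rw [hk1]; norm_num
        rw [hzk, Real.zero_rpow (neg_ne_zero.mpr hbm), abs_zero, div_zero]
        exact mul_nonneg (by linarith) hnB0.le
    · -- denominator index ≤ -2
      have hk2 : k ≤ -2 := by omega
      have hKr : (k : ℝ) ≤ -2 := by exact_mod_cast hk2
      have habsk := abs_LsbW_neg (bp := bp) (bm := bm) hk2
      by_cases hγ : γ = 0
      · rw [habsk, ← hγdef, hγ, mul_zero, div_zero]
        exact mul_nonneg (by linarith) hnB0.le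
      · have hγ0 : 0 < γ := lt_of_le_of_ne (abs_nonneg _) (Ne.symm hγ)
        have hbase : (1 : ℝ) ≤ -(1 + (k : ℝ)) := by linarith
        by_cases hk₀ : 0 ≤ k₀
        · have hK0 : (0 : ℝ) ≤ (k₀ : ℝ) := by exact_mod_cast hk₀
          rw [wpos _ hk₀, habsk, ← hγdef, abs_of_pos (Real.rpow_pos_of_pos (by linarith) (-bp)),
            div_mul_eq_div_div, div_eq_mul_inv, div_eq_mul_inv,
            Real.rpow_neg (by linarith : (0 : ℝ) ≤ -(1 + (k : ℝ))), inv_inv]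
          have b1 : (1 + (k₀ : ℝ)) ^ (-bp) ≤ (1 + (n : ℝ)) ^ |bp| :=
            rpow_sandwich (by linarith) (by linarith) (neg_le_abs bp) (abs_nonneg _)
          have b2 : (-(1 + (k : ℝ))) ^ bm ≤ (1 + (n : ℝ)) ^ |bm| :=
            rpow_sandwich hbase (by linarith) (le_abs_self bm) (abs_nonneg _)
          have b3 : γ⁻¹ ≤ M := le_max_right _ _
          calc (1 + (k₀ : ℝ)) ^ (-bp) * (-(1 + (k : ℝ))) ^ bm * γ⁻¹
              ≤ (1 + (n : ℝ)) ^ |bp| * (1 + (n : ℝ)) ^ |bm| * M := by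
                apply mul_le_mul _ b3 (inv_nonneg.mpr hγ0.le) (by positivity)
                exact mul_le_mul b1 b2 (Real.rpow_nonneg (by linarith) _)
                  (Real.rpow_nonneg (by linarith) _)
            _ = M * (1 + (n : ℝ)) ^ B := by
                rw [hBdef, Real.rpow_add (by linarith : (0 : ℝ) < 1 + (n : ℝ))]; ring
        · by_cases hk₀1 : k₀ = -1
          · by_cases hbm : bm = 0
            · subst hbm
              have hγ1 : γ = 1 := by rw [hγdef]; norm_num
              rw [wneg _ hk₀, habsk, ← hγdef, hγ1]
              norm_num
              exact le_trans hnB1 hMB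
            · rw [wneg _ hk₀]
              have hzk : (1 : ℝ) + (k₀ : ℝ) = 0 := by rw [hk₀1]; norm_num
              rw [hzk, Real.zero_rpow (neg_ne_zero.mpr hbm), abs_zero, zero_div]
              exact mul_nonneg (by linarith) hnB0.le
          · have hk₀2 : k₀ ≤ -2 := by omega
            have hK0r : (k₀ : ℝ) ≤ -2 := by exact_mod_cast hk₀2
            have hb0 : (1 : ℝ) ≤ -(1 + (k₀ : ℝ)) := by linarith
            have habsk₀ := abs_LsbW_neg (bp := bp) (bm := bm) hk₀2
            rw [habsk₀, habsk, ← hγdef, mul_div_mul_right _ _ hγ,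
              ← Real.div_rpow (by linarith : (0 : ℝ) ≤ -(1 + (k₀ : ℝ)))
                (by linarith : (0 : ℝ) ≤ -(1 + (k : ℝ))),
              Real.rpow_neg (div_nonneg (by linarith) (by linarith)),
              ← Real.inv_rpow (div_nonneg (by linarith) (by linarith)), inv_div]
            have ht1 : (1 : ℝ) ≤ -(1 + (k : ℝ)) / -(1 + (k₀ : ℝ)) :=
              (one_le_div (by linarith)).mpr (by rw [hkk]; linarith)
            have htn : -(1 + (k : ℝ)) / -(1 + (k₀ : ℝ)) ≤ 1 + (n : ℝ) := by
              rw [div_le_iff₀ (by linarith)]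
              nlinarith [mul_nonneg hn0 (by linarith : (0 : ℝ) ≤ -(1 + (k₀ : ℝ)) - 1)]
            have hbmB : bm ≤ B := (le_abs_self bm).trans
              (le_add_of_nonneg_left (abs_nonneg bp))
            exact le_trans (rpow_sandwich ht1 htn hbmB hB0) hMB

lemma abs_Lsb_ratio_le {s bp bm δ : ℝ} (hδ0 : 0 < δ) (hδ1 : δ < 1) (k₀ : ℤ) (n : ℕ) :
    |Lsb s bp bm δ (δ ^ k₀) / Lsb s bp bm δ (δ ^ (k₀ - (n : ℤ)))| ≤
      max 1 |Real.cos (bm * Real.pi)|⁻¹ * (1 + (n : ℝ)) ^ (|bp| + |bm|) * (δ ^ n) ^ s := by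
  have hp0 : (0 : ℝ) < δ ^ k₀ := zpow_pos hδ0 _
  have hpk : (0 : ℝ) < δ ^ (k₀ - (n : ℤ)) := zpow_pos hδ0 _
  have hs1 : (δ ^ k₀) ^ s / (δ ^ (k₀ - (n : ℤ))) ^ s = ((δ ^ n : ℝ)) ^ s := by
    rw [← Real.div_rpow hp0.le hpk.le]
    congr 1
    rw [← zpow_sub₀ hδ0.ne']
    norm_num
  rw [Lsb_eval hδ0 hδ1, Lsb_eval hδ0 hδ1, mul_div_mul_comm, abs_mul,
    abs_of_pos (div_pos (Real.rpow_pos_of_pos hp0 s) (Real.rpow_pos_of_pos hpk s)), hs1,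
    abs_div]
  calc ((δ ^ n : ℝ)) ^ s * (|LsbW bp bm k₀| / |LsbW bp bm (k₀ - (n : ℤ))|)
      ≤ ((δ ^ n : ℝ)) ^ s * (max 1 |Real.cos (bm * Real.pi)|⁻¹ * (1 + (n : ℝ)) ^ (|bp| + |bm|)) :=
        mul_le_mul_of_nonneg_left (abs_LsbW_ratio_le k₀ n)
          (Real.rpow_nonneg (pow_nonneg hδ0.le n) s)
    _ = _ := by ring

/-- For `s > 0`, `δ ∈ (0,1)`, `b = (b₊,b₋)` and any `r > 0` there is
`C₀` such that for every `k₀ ∈ ℤ`,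
`∑_{k ≤ k₀} [L_{s,b}(δ^{k₀})/L_{s,b}(δ^k)]^r ≤ C₀` (the sum over `k ≤ k₀` is indexed by
`k = k₀ - n`, `n ∈ ℕ`). -/
theorem Lsb_geometric_sum (s : ℝ) (hs : 0 < s) (bp bm : ℝ)
    (δ : ℝ) (hδ0 : 0 < δ) (hδ1 : δ < 1) (r : ℝ) (hr : 0 < r) :
    ∃ C₀ : ℝ, 0 < C₀ ∧ ∀ k₀ : ℤ,
      ∑' n : ℕ,
          ENNReal.ofReal ((Lsb s bp bm δ (δ ^ k₀) / Lsb s bp bm δ (δ ^ (k₀ - (n : ℤ)))) ^ r) ≤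
        ENNReal.ofReal C₀ := by
  set M : ℝ := max 1 |Real.cos (bm * Real.pi)|⁻¹ with hM
  have hM1 : (1 : ℝ) ≤ M := le_max_left _ _
  set B : ℝ := |bp| + |bm| with hB
  have hB0 : 0 ≤ B := by positivity
  set m : ℕ := ⌈B * r⌉₊ with hm
  set ρ : ℝ := δ ^ (s * r) with hρ
  have hρ0 : 0 < ρ := Real.rpow_pos_of_pos hδ0 _
  have hρ1 : ρ < 1 := Real.rpow_lt_one hδ0.le hδ1 (mul_pos hs hr)
  set g : ℕ → ℝ := fun n => M ^ r * ((1 + (n : ℝ)) ^ m * ρ ^ n) with hg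
  have hgnn : ∀ n, 0 ≤ g n := by
    intro n
    have : (0:ℝ) < M := lt_of_lt_of_le one_pos hM1
    positivity
  have hgsum : Summable g := by
    apply Summable.mul_left
    have h0 : Summable (fun n : ℕ => ((n : ℝ)) ^ m * ρ ^ n) :=
      summable_pow_mul_geometric_of_norm_lt_one m
        (by rw [Real.norm_eq_abs, abs_of_pos hρ0]; exact hρ1)
    have h1 : Summable (fun n : ℕ => ((n + 1 : ℕ) : ℝ) ^ m * ρ ^ (n + 1)) :=
      (summable_nat_add_iff 1).mpr h0
    have h2 := h1.mul_left ρ⁻¹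
    refine h2.congr fun n => ?_
    push_cast
    field_simp
    ring
  have hterm : ∀ (k₀ : ℤ) (n : ℕ),
      ENNReal.ofReal ((Lsb s bp bm δ (δ ^ k₀) / Lsb s bp bm δ (δ ^ (k₀ - (n : ℤ)))) ^ r) ≤
        ENNReal.ofReal (g n) := by
    intro k₀ n
    apply ENNReal.ofReal_le_ofReal
    set x : ℝ := Lsb s bp bm δ (δ ^ k₀) / Lsb s bp bm δ (δ ^ (k₀ - (n : ℤ))) with hx
    have hn1 : (1 : ℝ) ≤ 1 + (n : ℝ) := by have := Nat.cast_nonneg (α := ℝ) n; linarith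
    have h1 : x ^ r ≤ |x| ^ r := (le_abs_self _).trans (Real.abs_rpow_le_abs_rpow x r)
    have h2 : |x| ^ r ≤ (M * (1 + (n : ℝ)) ^ B * (δ ^ n) ^ s) ^ r :=
      Real.rpow_le_rpow (abs_nonneg x) (abs_Lsb_ratio_le hδ0 hδ1 k₀ n) hr.le
    have h3 : (M * (1 + (n : ℝ)) ^ B * (δ ^ n) ^ s) ^ r ≤ g n := by
      have hMnn : (0:ℝ) ≤ M := by linarith
      have hnB : (0:ℝ) ≤ (1 + (n : ℝ)) ^ B := Real.rpow_nonneg (by linarith) _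
      rw [Real.mul_rpow (by positivity) (Real.rpow_nonneg (pow_nonneg hδ0.le n) s),
        Real.mul_rpow hMnn hnB]
      have e1 : ((1 + (n : ℝ)) ^ B) ^ r ≤ (1 + (n : ℝ)) ^ m := by
        rw [← Real.rpow_natCast (1 + (n : ℝ)) m, ← Real.rpow_mul (by linarith)]
        exact Real.rpow_le_rpow_of_exponent_le hn1 (Nat.le_ceil _)
      have e2 : (((δ ^ n : ℝ)) ^ s) ^ r = ρ ^ n := by
        rw [← Real.rpow_natCast δ n, ← Real.rpow_mul hδ0.le, ← Real.rpow_mul hδ0.le,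
          show ((n : ℝ) * s) * r = (s * r) * (n : ℝ) by ring, hρ,
          Real.rpow_mul hδ0.le, Real.rpow_natCast]
      rw [mul_assoc, hg]
      have hMr : (0:ℝ) ≤ M ^ r := Real.rpow_nonneg hMnn r
      refine mul_le_mul_of_nonneg_left ?_ hMr
      rw [e2]
      exact mul_le_mul_of_nonneg_right e1 (pow_nonneg hρ0.le n)
    linarith
  set S : ℝ := ∑' n, g n with hS
  have hS0 : 0 ≤ S := tsum_nonneg hgnn
  refine ⟨S + 1, by linarith, fun k₀ => ?_⟩
  calc ∑' n : ℕ, ENNReal.ofReal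
        ((Lsb s bp bm δ (δ ^ k₀) / Lsb s bp bm δ (δ ^ (k₀ - (n : ℤ)))) ^ r)
      ≤ ∑' n : ℕ, ENNReal.ofReal (g n) := ENNReal.tsum_le_tsum (hterm k₀)
    _ = ENNReal.ofReal S := (ENNReal.ofReal_tsum_of_nonneg hgnn hgsum).symm
    _ ≤ ENNReal.ofReal (S + 1) := ENNReal.ofReal_le_ofReal (by linarith)
end

section
/- Let (X,d,μ) be a space of homogeneous type, and let {Q_α^{k+1} : α ∈ 𝒢_k} be the dyadic cubes of generation k+1 that refine generation k, with associated points y_α^k = z_α^{k+1}. Let γ > 0, p ∈ (1,∞), W ∈ A_p(X,ℂ^m). Then there is C such that for all vectors {a⃗_{k,α}} ⊂ ℂ^m, all k, l ∈ ℤ, and all x ∈ X: ∑_{α∈𝒢_k} μ(Q_α^{k+1})^{1/2} ‖W^{1/p}(x) a⃗_{k,α}‖ D_γ(x, y_α^k; δ^{k∧l}) ≤ C · M_{W,p}(W^{1/p} ∑_{α∈𝒢_k} a⃗_{k,α} μ(Q_α^{k+1})^{-1/2} 1_{Q_α^{k+1}})(x). -/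
open MeasureTheory
open scoped ENNReal ComplexOrder

lemma exists_dyadic {u : ℝ} (hu : 1 ≤ u) : ∃ n : ℕ, 2 ^ n ≤ u ∧ u < 2 ^ (n + 1) := by
  have hne : ∃ n : ℕ, u < 2 ^ (n + 1) := by
    obtain ⟨n, hn⟩ := pow_unbounded_of_one_lt u (one_lt_two (α := ℝ))
    exact ⟨n, hn.trans_le (pow_le_pow_right₀ one_le_two (Nat.le_succ n))⟩
  classical
  set n := Nat.find hne with hn
  have h1 : u < 2 ^ (n + 1) := Nat.find_spec hne
  refine ⟨n, ?_, h1⟩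
  match n, hn with
  | 0, _ => simpa using hu
  | (m+1), hn => 
    have := Nat.find_min hne (show m < n from by omega)
    push_neg at this
    exact this

lemma matRpow_neg_mul {m : ℕ} {A : Matrix (Fin m) (Fin m) ℂ} (hA : A.PosSemidef)
    (hU : IsUnit A) (s : ℝ) : matRpow A (-s) * matRpow A s = 1 := by
  have hH := hA.isHermitian
  have hdet : A.det ≠ 0 := by
    intro h
    exact (by simp [h] : ¬ IsUnit (A.det)) ((Matrix.isUnit_iff_isUnit_det A).1 hU)
  have hpos : ∀ i, 0 < hH.eigenvalues i := by
    intro i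
    rcases (hA.eigenvalues_nonneg i).lt_or_eq with h | h
    · exact h
    · exfalso
      apply hdet
      rw [hH.det_eq_prod_eigenvalues]
      exact Finset.prod_eq_zero (Finset.mem_univ i) (by rw [← h]; simp)
  rw [matRpow, matRpow, dif_pos hH, dif_pos hH]
  set U : Matrix (Fin m) (Fin m) ℂ := (hH.eigenvectorUnitary : Matrix (Fin m) (Fin m) ℂ) with hUdef
  set D₁ : Matrix (Fin m) (Fin m) ℂ := Matrix.diagonal (fun i => ((hH.eigenvalues i ^ (-s) : ℝ) : ℂ))
  set D₂ : Matrix (Fin m) (Fin m) ℂ := Matrix.diagonal (fun i => ((hH.eigenvalues i ^ s : ℝ) : ℂ))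
  have hUU : star U * U = 1 := Unitary.coe_star_mul_self _
  have hUU' : U * star U = 1 := Unitary.coe_mul_star_self _
  have key : D₁ * D₂ = 1 := by
    rw [Matrix.diagonal_mul_diagonal]
    have : (fun i => ((hH.eigenvalues i ^ (-s) : ℝ) : ℂ) * ((hH.eigenvalues i ^ s : ℝ) : ℂ))
        = fun _ => (1 : ℂ) := by
      funext i
      rw [← Complex.ofReal_mul, ← Real.rpow_add (hpos i), neg_add_cancel, Real.rpow_zero,
        Complex.ofReal_one]
    rw [this, Matrix.diagonal_one]
  calc U * D₁ * star U * (U * D₂ * star U)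
      = U * (D₁ * ((star U * U) * (D₂ * star U))) := by simp only [Matrix.mul_assoc]
    _ = U * ((D₁ * D₂) * star U) := by rw [hUU, Matrix.one_mul, Matrix.mul_assoc]
    _ = 1 := by rw [key, Matrix.one_mul, hUU']
/-- Pointwise domination of the wavelet-type sums
`∑_α μ(Q_α^{k+1})^{1/2} ‖W^{1/p}(x) a⃗_{k,α}‖ D_γ(x,y_α^k;δ^{k∧l})` by the
matrix-weighted maximal operator
`M_{W,p}(W^{1/p} ∑_α a⃗_{k,α} μ(Q_α^{k+1})^{-1/2} 1_{Q_α^{k+1}})(x)`, where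
`D_γ(x,y;r) = [V_r(x)+V(x,y)]⁻¹ (r/(r+d(x,y)))^γ` and
`M_{W,p}(F)(x) = sup_{B ∋ x} ⨍_B ‖W^{1/p}(x) W^{-1/p}(y) F(y)‖ dμ(y)`. -/
theorem wavelet_sum_le_maximal {X : Type*} [MeasurableSpace X] {ι : Type*}
    (d : X → X → ℝ) (A₀ : ℝ) (hA₀ : 1 ≤ A₀)
    (hd_nonneg : ∀ x y, 0 ≤ d x y)
    (hd_eq : ∀ x y, d x y = 0 ↔ x = y)
    (hd_symm : ∀ x y, d x y = d y x)
    (hd_tri : ∀ x y u, d x y ≤ A₀ * (d x u + d u y))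
    (μ : Measure X)
    (hballμ : ∀ (x : X) (r : ℝ), 0 < r → 0 < μ {y | d y x < r} ∧ μ {y | d y x < r} < ⊤)
    (Cμ : ℝ≥0∞) (hCμ : 1 ≤ Cμ) (hCμfin : Cμ < ⊤)
    (hdoub : ∀ (x : X) (r : ℝ), 0 < r → μ {y | d y x < 2 * r} ≤ Cμ * μ {y | d y x < r})
    -- the dyadic cubes `Q_α^{k+1}`, `α ∈ 𝒢_k`, with associated points `y_α^k`
    (δ : ℝ) (hδ0 : 0 < δ) (hδ1 : δ < 1)
    (cube : ℤ → ι → Set X) (y : ℤ → ι → X)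
    (hdisj : ∀ k : ℤ, Pairwise fun α β => Disjoint (cube k α) (cube k β))
    (Cb : ℝ) (hCb : 0 < Cb)
    (hsub : ∀ (k : ℤ) (α : ι), cube k α ⊆ {w | d w (y k α) < Cb * δ ^ k})
    (cb : ℝ≥0∞) (hcb : 0 < cb)
    (hcubeμ : ∀ (k : ℤ) (α : ι), MeasurableSet (cube k α) ∧
      cb * μ {w | d w (y k α) < δ ^ k} ≤ μ (cube k α) ∧
        μ (cube k α) ≤ μ {w | d w (y k α) < δ ^ k})
    -- the matrix weight and its `A_p` condition, `p ∈ (1,∞)`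
    (γ : ℝ) (hγ : 0 < γ) (m : ℕ) (p : ℝ) (hp : 1 < p)
    (W : X → Matrix (Fin m) (Fin m) ℂ) (hW : ∀ x, (W x).PosSemidef)
    (hWinv : ∀ᵐ x ∂μ, IsUnit (W x))
    (CW : ℝ)
    (hAp : ∀ (x₀ : X) (r : ℝ), 0 < r →
      (μ {u | d u x₀ < r})⁻¹ *
          ∫⁻ x in {u | d u x₀ < r},
            ((μ {u | d u x₀ < r})⁻¹ *
              ∫⁻ w in {u | d u x₀ < r},
                ENNReal.ofReal (opN (matRpow (W x) (1 / p) * matRpow (W w) (-(1 / p)))) ^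
                  (p / (p - 1)) ∂μ) ^ (p - 1) ∂μ ≤
        ENNReal.ofReal CW) :
    ∃ C : ℝ≥0∞, C ≠ ⊤ ∧ ∀ (a : ι → EuclideanSpace ℂ (Fin m)) (k l : ℤ) (x : X),
      ∑' α : ι,
          μ (cube k α) ^ ((1 : ℝ) / 2) *
            (‖matCLM (matRpow (W x) (1 / p)) (a α)‖₊ : ℝ≥0∞) *
            ((μ {w | d w x < δ ^ min k l} + μ {w | d w x < d x (y k α)})⁻¹ *
              ENNReal.ofReal ((δ ^ min k l / (δ ^ min k l + d x (y k α))) ^ γ)) ≤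
        C * ⨆ (x₀ : X) (r : ℝ) (_ : 0 < r ∧ d x x₀ < r),
          (μ {u | d u x₀ < r})⁻¹ *
            ∫⁻ w in {u | d u x₀ < r},
              (‖matCLM (matRpow (W x) (1 / p) * matRpow (W w) (-(1 / p)))
                  (matCLM (matRpow (W w) (1 / p))
                    (∑' β : ι, Set.indicator (cube k β)
                      (fun _ => ((μ (cube k β)).toReal ^ (-(1 / 2) : ℝ)) • a β) w))‖₊ :
                ℝ≥0∞) ∂μ := by
  classical
  obtain ⟨N, hN⟩ : ∃ N : ℕ, A₀ * (Cb + 4) ≤ 2 ^ N := by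
    obtain ⟨N, hN⟩ := pow_unbounded_of_one_lt (A₀ * (Cb + 4)) (one_lt_two (α := ℝ))
    exact ⟨N, hN.le⟩
  have hCN0 : (Cμ : ℝ≥0∞) ^ N ≠ 0 :=
    pow_ne_zero N (by intro h; rw [h] at hCμ; simp at hCμ)
  have hCNT : (Cμ : ℝ≥0∞) ^ N ≠ ⊤ := ENNReal.pow_ne_top hCμfin.ne
  set ρ : ℝ≥0∞ := ENNReal.ofReal ((2 : ℝ) ^ (-γ)) with hρdef
  have hρ1 : ρ < 1 := by
    rw [hρdef, ENNReal.ofReal_lt_one]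
    exact Real.rpow_lt_one_of_one_lt_of_neg one_lt_two (neg_lt_zero.mpr hγ)
  refine ⟨Cμ ^ N * ∑' j : ℕ, ρ ^ j, ?_, ?_⟩
  · refine ENNReal.mul_ne_top hCNT ?_
    rw [ENNReal.tsum_geometric]
    exact ENNReal.inv_ne_top.mpr (by simp [tsub_eq_zero_iff_le, not_le, hρ1])
  intro a k l x
  set r0 : ℝ := δ ^ min k l with hr0def
  have hr0 : 0 < r0 := zpow_pos hδ0 _
  have hδk : δ ^ k ≤ r0 := by
    rw [hr0def]
    exact zpow_le_zpow_right_of_le_one₀ hδ0 hδ1.le (min_le_left k l)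
  have hdxx : d x x = 0 := (hd_eq x x).mpr rfl
  have hQpos : ∀ α, μ (cube k α) ≠ 0 := by
    intro α
    have h1 := (hcubeμ k α).2.1
    have h2 : 0 < cb * μ {w | d w (y k α) < δ ^ k} :=
      ENNReal.mul_pos hcb.ne' (hballμ (y k α) (δ ^ k) (zpow_pos hδ0 k)).1.ne'
    exact (lt_of_lt_of_le h2 h1).ne'
  have hQfin : ∀ α, μ (cube k α) ≠ ⊤ := fun α =>
    ((hcubeμ k α).2.2.trans_lt (hballμ (y k α) (δ ^ k) (zpow_pos hδ0 k)).2).ne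
  set G : X → ℝ≥0∞ := fun w =>
    (‖matCLM (matRpow (W x) (1 / p) * matRpow (W w) (-(1 / p)))
        (matCLM (matRpow (W w) (1 / p))
          (∑' β : ι, Set.indicator (cube k β)
            (fun _ => ((μ (cube k β)).toReal ^ (-(1 / 2) : ℝ)) • a β) w))‖₊ : ℝ≥0∞) with hG
  set Msup : ℝ≥0∞ := ⨆ (x₀ : X) (r : ℝ) (_ : 0 < r ∧ d x x₀ < r),
    (μ {u | d u x₀ < r})⁻¹ * ∫⁻ w in {u | d u x₀ < r}, G w ∂μ with hM
  -- doubling iterate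
  have hiter : ∀ (n : ℕ) (R : ℝ), 0 < R →
      μ {u | d u x < 2 ^ n * R} ≤ Cμ ^ n * μ {u | d u x < R} := by
    intro n
    induction n with
    | zero => intro R hR; simp
    | succ n ih =>
      intro R hR
      have h1 : ((2 : ℝ) ^ (n + 1)) * R = 2 ^ n * (2 * R) := by ring
      calc μ {u | d u x < 2 ^ (n + 1) * R} = μ {u | d u x < 2 ^ n * (2 * R)} := by rw [h1]
        _ ≤ Cμ ^ n * μ {u | d u x < 2 * R} := ih (2 * R) (by positivity)
        _ ≤ Cμ ^ n * (Cμ * μ {u | d u x < R}) := mul_le_mul_right (hdoub x R hR) _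
        _ = Cμ ^ (n + 1) * μ {u | d u x < R} := by rw [pow_succ, mul_assoc]
  -- a.e. matrix identity
  have hae : ∀ᵐ w ∂μ, ∀ v : EuclideanSpace ℂ (Fin m),
      matCLM (matRpow (W x) (1 / p) * matRpow (W w) (-(1 / p)))
        (matCLM (matRpow (W w) (1 / p)) v) = matCLM (matRpow (W x) (1 / p)) v := by
    filter_upwards [hWinv] with w hw v
    have hcomp : ∀ (P Q : Matrix (Fin m) (Fin m) ℂ) (u : EuclideanSpace ℂ (Fin m)),
        matCLM (P * Q) u = matCLM P (matCLM Q u) := by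
      intro P Q u
      simp only [matCLM, map_mul, ContinuousLinearMap.mul_apply]
    rw [hcomp, ← hcomp (matRpow (W w) (-(1 / p))) (matRpow (W w) (1 / p)),
      matRpow_neg_mul (hW w) hw (1 / p)]
    simp [matCLM, map_one]
  -- integral of G over a single cube
  have hcube_int : ∀ α : ι, ∫⁻ w in cube k α, G w ∂μ =
      μ (cube k α) ^ ((1 : ℝ) / 2) * (‖matCLM (matRpow (W x) (1 / p)) (a α)‖₊ : ℝ≥0∞) := by
    intro α
    have hval : ∀ w ∈ cube k α,
        (∑' β : ι, Set.indicator (cube k β)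
          (fun _ => ((μ (cube k β)).toReal ^ (-(1 / 2) : ℝ)) • a β) w)
        = ((μ (cube k α)).toReal ^ (-(1 / 2) : ℝ)) • a α := by
      intro w hw
      rw [tsum_eq_single α ?_]
      · exact Set.indicator_of_mem hw _
      · intro β hβ
        refine Set.indicator_of_notMem ?_ _
        intro hwβ
        exact (Set.disjoint_left.mp (hdisj k hβ) hwβ) hw
    have hc_nonneg : (0 : ℝ) ≤ (μ (cube k α)).toReal ^ (-(1 / 2) : ℝ) :=
      Real.rpow_nonneg ENNReal.toReal_nonneg _
    have hconst : ∀ᵐ w ∂(μ.restrict (cube k α)),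
        G w = ENNReal.ofReal ((μ (cube k α)).toReal ^ (-(1 / 2) : ℝ)) *
          (‖matCLM (matRpow (W x) (1 / p)) (a α)‖₊ : ℝ≥0∞) := by
      filter_upwards [ae_restrict_of_ae hae, ae_restrict_mem (hcubeμ k α).1] with w hw hwQ
      simp only [hG]
      rw [hval w hwQ, hw (((μ (cube k α)).toReal ^ (-(1 / 2) : ℝ)) • a α),
        ContinuousLinearMap.map_smul_of_tower, nnnorm_smul, ENNReal.coe_mul]
      congr 1
      rw [Real.nnnorm_of_nonneg hc_nonneg]
      rw [ENNReal.ofReal_eq_coe_nnreal hc_nonneg]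
    rw [lintegral_congr_ae hconst, setLIntegral_const, ENNReal.toReal_rpow,
      ENNReal.ofReal_toReal (by simp [ENNReal.rpow_eq_top_iff, hQpos α, hQfin α])]
    rw [mul_right_comm]
    congr 1
    nth_rewrite 2 [← ENNReal.rpow_one (μ (cube k α))]
    rw [← ENNReal.rpow_add _ _ (hQpos α) (hQfin α)]
    norm_num
  -- the maximal-function bound for a family of cubes inside a ball
  have hmax : ∀ (R : ℝ), 0 < R → ∀ S : Set ι,
      (∀ α ∈ S, cube k α ⊆ {u | d u x < R}) →
      (μ {u | d u x < R})⁻¹ * ∑' α : ι, Set.indicator S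
        (fun β => μ (cube k β) ^ ((1 : ℝ) / 2) *
          (‖matCLM (matRpow (W x) (1 / p)) (a β)‖₊ : ℝ≥0∞)) α ≤ Msup := by
    intro R hR S hS
    have hsum : ∑' α : ι, Set.indicator S
        (fun β => μ (cube k β) ^ ((1 : ℝ) / 2) *
          (‖matCLM (matRpow (W x) (1 / p)) (a β)‖₊ : ℝ≥0∞)) α
        ≤ ∫⁻ w in {u | d u x < R}, G w ∂μ := by
      rw [ENNReal.tsum_eq_iSup_sum]
      refine iSup_le fun F => ?_
      have hrw : ∑ α ∈ F, Set.indicator S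
          (fun β => μ (cube k β) ^ ((1 : ℝ) / 2) *
            (‖matCLM (matRpow (W x) (1 / p)) (a β)‖₊ : ℝ≥0∞)) α
          = ∑ α ∈ F.filter (· ∈ S), ∫⁻ w in cube k α, G w ∂μ := by
        rw [Finset.sum_filter]
        refine Finset.sum_congr rfl fun α _ => ?_
        by_cases hα : α ∈ S
        · rw [Set.indicator_of_mem hα, if_pos hα, hcube_int α]
        · rw [Set.indicator_of_notMem hα, if_neg hα]
      rw [hrw]
      have hdisj' : Set.PairwiseDisjoint ↑(F.filter (· ∈ S)) (cube k) :=
        fun α _ β _ hne => hdisj k hne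
      rw [← lintegral_biUnion_finset hdisj' (fun α _ => (hcubeμ k α).1)]
      refine lintegral_mono_set ?_
      intro w hw
      simp only [Set.mem_iUnion] at hw
      obtain ⟨β, hβF, hwβ⟩ := hw
      exact hS β (Finset.mem_filter.mp hβF).2 hwβ
    refine le_trans (mul_le_mul_right hsum _) ?_
    rw [hM]
    exact le_iSup_of_le x (le_iSup_of_le R (le_iSup_of_le ⟨hR, by rw [hdxx]; exact hR⟩ le_rfl))
  -- choice of dyadic index for each α
  have hchoice : ∀ α : ι, ∃ j : ℕ,
      2 ^ j * r0 ≤ r0 + d x (y k α) ∧ r0 + d x (y k α) < 2 ^ (j + 1) * r0 := by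
    intro α
    have h1 : (1 : ℝ) ≤ (r0 + d x (y k α)) / r0 := by
      rw [le_div_iff₀ hr0]
      nlinarith [hd_nonneg x (y k α)]
    obtain ⟨j, hj1, hj2⟩ := exists_dyadic h1
    exact ⟨j, (le_div_iff₀ hr0).mp hj1, (div_lt_iff₀ hr0).mp hj2⟩
  choose jf hjf1 hjf2 using hchoice
  set Rj : ℕ → ℝ := fun j => 2 ^ N * (2 ^ (j - 1) * r0) with hRj
  have hRjpos : ∀ j, 0 < Rj j := fun j => by simp only [hRj]; positivity
  have h2pow : ∀ j : ℕ, (1 : ℝ) ≤ 2 ^ (j - 1) := fun j => one_le_pow₀ one_le_two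
  -- cubes are inside the balls of radius Rj
  have hQsub : ∀ α : ι, cube k α ⊆ {u | d u x < Rj (jf α)} := by
    intro α w hw
    have h1 : d w (y k α) < Cb * δ ^ k := hsub k α hw
    have h2 : d w x ≤ A₀ * (d w (y k α) + d (y k α) x) := hd_tri w x (y k α)
    have h3 : d (y k α) x = d x (y k α) := hd_symm _ _
    have h4 : r0 + d x (y k α) < 2 ^ (jf α + 1) * r0 := hjf2 α
    have h5 : (1 : ℝ) ≤ 2 ^ (jf α - 1) := h2pow (jf α)
    have h6 : (2 : ℝ) ^ (jf α + 1) ≤ 4 * 2 ^ (jf α - 1) := by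
      rcases Nat.eq_zero_or_pos (jf α) with h | h
      · norm_num [h]
      · have he : jf α - 1 + 2 = jf α + 1 := by omega
        calc (2 : ℝ) ^ (jf α + 1) = 2 ^ (jf α - 1 + 2) := by rw [he]
          _ = 4 * 2 ^ (jf α - 1) := by rw [pow_add]; ring
          _ ≤ 4 * 2 ^ (jf α - 1) := le_rfl
    have hδk' : Cb * δ ^ k ≤ Cb * r0 := mul_le_mul_of_nonneg_left hδk hCb.le
    have key : d w x < A₀ * ((Cb + 4) * (2 ^ (jf α - 1) * r0)) := by
      have t1 : d w x ≤ A₀ * (d w (y k α) + d x (y k α)) := by rw [← h3]; exact h2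
      have t2 : d w (y k α) + d x (y k α) < Cb * r0 + 2 ^ (jf α + 1) * r0 := by
        have hd4 : d x (y k α) < 2 ^ (jf α + 1) * r0 := by nlinarith
        exact add_lt_add_of_lt_of_le (h1.trans_le hδk') hd4.le
      have t3 : Cb * r0 + 2 ^ (jf α + 1) * r0 ≤ (Cb + 4) * (2 ^ (jf α - 1) * r0) := by
        nlinarith [mul_nonneg (mul_nonneg hCb.le hr0.le) (sub_nonneg.mpr h5),
          mul_le_mul_of_nonneg_right h6 hr0.le]
      have hA0 : (0 : ℝ) < A₀ := by linarith
      exact t1.trans_lt (by nlinarith)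
    show d w x < Rj (jf α)
    simp only [hRj]
    have : A₀ * ((Cb + 4) * (2 ^ (jf α - 1) * r0)) ≤ 2 ^ N * (2 ^ (jf α - 1) * r0) := by
      have hs : (0 : ℝ) ≤ 2 ^ (jf α - 1) * r0 := by positivity
      calc A₀ * ((Cb + 4) * (2 ^ (jf α - 1) * r0))
          = (A₀ * (Cb + 4)) * (2 ^ (jf α - 1) * r0) := by ring
        _ ≤ 2 ^ N * (2 ^ (jf α - 1) * r0) := mul_le_mul_of_nonneg_right hN hs
    exact key.trans_le this
  -- measure lower bound
  have hsumge : ∀ α : ι, μ {u | d u x < 2 ^ (jf α - 1) * r0} ≤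
      μ {w | d w x < r0} + μ {w | d w x < d x (y k α)} := by
    intro α
    rcases Nat.eq_zero_or_pos (jf α) with h | h
    · refine le_trans (measure_mono ?_) le_self_add
      intro u hu
      simpa [h] using hu
    · refine le_trans (measure_mono ?_) le_add_self
      intro u hu
      have h1 : 2 ^ (jf α) * r0 ≤ r0 + d x (y k α) := hjf1 α
      have h2 : (2 : ℝ) * 2 ^ (jf α - 1) = 2 ^ (jf α) := by
        rw [← pow_succ']
        congr 1
        omega
      have h5 : (1 : ℝ) ≤ 2 ^ (jf α - 1) := h2pow (jf α)
      have : (2 : ℝ) ^ (jf α - 1) * r0 ≤ d x (y k α) := by nlinarith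
      exact lt_of_lt_of_le hu this
  have hDec : ∀ α : ι, (μ {w | d w x < r0} + μ {w | d w x < d x (y k α)})⁻¹ ≤
      Cμ ^ N * (μ {u | d u x < Rj (jf α)})⁻¹ := by
    intro α
    have h1 : μ {u | d u x < Rj (jf α)} ≤
        Cμ ^ N * (μ {w | d w x < r0} + μ {w | d w x < d x (y k α)}) := by
      calc μ {u | d u x < Rj (jf α)}
          ≤ Cμ ^ N * μ {u | d u x < 2 ^ (jf α - 1) * r0} := by
            simpa only [hRj] using hiter N (2 ^ (jf α - 1) * r0) (by positivity)
        _ ≤ _ := mul_le_mul_right (hsumge α) _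
    have h2 : (Cμ ^ N * (μ {w | d w x < r0} + μ {w | d w x < d x (y k α)}))⁻¹ ≤
        (μ {u | d u x < Rj (jf α)})⁻¹ := ENNReal.inv_le_inv' h1
    calc (μ {w | d w x < r0} + μ {w | d w x < d x (y k α)})⁻¹
        = Cμ ^ N * (Cμ ^ N)⁻¹ *
          (μ {w | d w x < r0} + μ {w | d w x < d x (y k α)})⁻¹ := by
          rw [ENNReal.mul_inv_cancel hCN0 hCNT, one_mul]
      _ = Cμ ^ N * (Cμ ^ N * (μ {w | d w x < r0} + μ {w | d w x < d x (y k α)}))⁻¹ := by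
          rw [mul_assoc, ← ENNReal.mul_inv (Or.inl hCN0) (Or.inl hCNT)]
      _ ≤ Cμ ^ N * (μ {u | d u x < Rj (jf α)})⁻¹ := mul_le_mul_right h2 _
  -- decay factor bound
  have hDfac : ∀ α : ι, ENNReal.ofReal ((r0 / (r0 + d x (y k α))) ^ γ) ≤ ρ ^ (jf α) := by
    intro α
    have hd0 : 0 ≤ d x (y k α) := hd_nonneg _ _
    have hb : (0 : ℝ) < 2 ^ (jf α) * r0 := by positivity
    have h1 : r0 / (r0 + d x (y k α)) ≤ ((2 : ℝ) ^ (jf α))⁻¹ := by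
      calc r0 / (r0 + d x (y k α)) ≤ r0 / (2 ^ (jf α) * r0) :=
            div_le_div_of_nonneg_left hr0.le hb (hjf1 α)
        _ = ((2 : ℝ) ^ (jf α))⁻¹ := by
            rw [mul_comm, div_mul_eq_div_div, div_self hr0.ne', one_div]
    have h2 : (r0 / (r0 + d x (y k α))) ^ γ ≤ (((2 : ℝ) ^ (jf α))⁻¹) ^ γ :=
      Real.rpow_le_rpow (by positivity) h1 hγ.le
    refine le_trans (ENNReal.ofReal_le_ofReal h2) ?_
    have h3 : (((2 : ℝ) ^ (jf α))⁻¹) ^ γ = ((2 : ℝ) ^ (-γ)) ^ (jf α) := by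
      have hi : ((2 : ℝ) ^ (jf α))⁻¹ = (2 : ℝ) ^ (-(jf α : ℝ)) := by
        rw [Real.rpow_neg (by norm_num), Real.rpow_natCast]
      rw [hi, ← Real.rpow_natCast ((2 : ℝ) ^ (-γ)) (jf α),
        ← Real.rpow_mul (by norm_num : (0 : ℝ) ≤ 2),
        ← Real.rpow_mul (by norm_num : (0 : ℝ) ≤ 2)]
      ring_nf
    rw [h3, hρdef, ← ENNReal.ofReal_pow (by positivity)]
  -- final assembly
  calc ∑' α : ι,
        μ (cube k α) ^ ((1 : ℝ) / 2) *
          (‖matCLM (matRpow (W x) (1 / p)) (a α)‖₊ : ℝ≥0∞) *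
          ((μ {w | d w x < r0} + μ {w | d w x < d x (y k α)})⁻¹ *
            ENNReal.ofReal ((r0 / (r0 + d x (y k α))) ^ γ))
      ≤ ∑' α : ι, ∑' j : ℕ, Set.indicator {β : ι | jf β = j}
          (fun β => Cμ ^ N * ρ ^ j * ((μ {u | d u x < Rj j})⁻¹ *
            (μ (cube k β) ^ ((1 : ℝ) / 2) *
              (‖matCLM (matRpow (W x) (1 / p)) (a β)‖₊ : ℝ≥0∞)))) α := by
        refine ENNReal.tsum_le_tsum fun α => ?_
        refine le_trans ?_ (ENNReal.le_tsum (jf α))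
        rw [Set.indicator_of_mem (show α ∈ {β : ι | jf β = jf α} from rfl)]
        calc μ (cube k α) ^ ((1 : ℝ) / 2) *
              (‖matCLM (matRpow (W x) (1 / p)) (a α)‖₊ : ℝ≥0∞) *
              ((μ {w | d w x < r0} + μ {w | d w x < d x (y k α)})⁻¹ *
                ENNReal.ofReal ((r0 / (r0 + d x (y k α))) ^ γ))
            ≤ μ (cube k α) ^ ((1 : ℝ) / 2) *
              (‖matCLM (matRpow (W x) (1 / p)) (a α)‖₊ : ℝ≥0∞) *
              ((Cμ ^ N * (μ {u | d u x < Rj (jf α)})⁻¹) * ρ ^ (jf α)) :=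
              mul_le_mul_right (mul_le_mul' (hDec α) (hDfac α)) _
          _ = Cμ ^ N * ρ ^ (jf α) * ((μ {u | d u x < Rj (jf α)})⁻¹ *
              (μ (cube k α) ^ ((1 : ℝ) / 2) *
                (‖matCLM (matRpow (W x) (1 / p)) (a α)‖₊ : ℝ≥0∞))) := by ring
    _ = ∑' j : ℕ, ∑' α : ι, Set.indicator {β : ι | jf β = j}
          (fun β => Cμ ^ N * ρ ^ j * ((μ {u | d u x < Rj j})⁻¹ *
            (μ (cube k β) ^ ((1 : ℝ) / 2) *
              (‖matCLM (matRpow (W x) (1 / p)) (a β)‖₊ : ℝ≥0∞)))) α := ENNReal.tsum_comm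
    _ ≤ ∑' j : ℕ, Cμ ^ N * ρ ^ j * Msup := by
        refine ENNReal.tsum_le_tsum fun j => ?_
        have heq : ∑' α : ι, Set.indicator {β : ι | jf β = j}
            (fun β => Cμ ^ N * ρ ^ j * ((μ {u | d u x < Rj j})⁻¹ *
              (μ (cube k β) ^ ((1 : ℝ) / 2) *
                (‖matCLM (matRpow (W x) (1 / p)) (a β)‖₊ : ℝ≥0∞)))) α
            = Cμ ^ N * ρ ^ j * ((μ {u | d u x < Rj j})⁻¹ *
              ∑' α : ι, Set.indicator {β : ι | jf β = j}
                (fun β => μ (cube k β) ^ ((1 : ℝ) / 2) *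
                  (‖matCLM (matRpow (W x) (1 / p)) (a β)‖₊ : ℝ≥0∞)) α) := by
          rw [← ENNReal.tsum_mul_left, ← ENNReal.tsum_mul_left]
          refine tsum_congr fun α => ?_
          by_cases hα : jf α = j
          · simp only [Set.indicator_of_mem (show α ∈ {β : ι | jf β = j} from hα)]
          · simp only [Set.indicator_of_notMem (show α ∉ {β : ι | jf β = j} from hα),
              mul_zero]
        rw [heq]
        refine mul_le_mul_right ?_ _
        refine hmax (Rj j) (hRjpos j) {β : ι | jf β = j} fun α hα => ?_
        have : jf α = j := hα
        rw [← this]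
        exact hQsub α
    _ = (Cμ ^ N * ∑' j : ℕ, ρ ^ j) * Msup := by
        rw [ENNReal.tsum_mul_right, ENNReal.tsum_mul_left]
end
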